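/- arXiv:1311.5127 — 7 statements merged into one kernel-verified Lean document; each statement's English description precedes it below -/
import Mathlib

section
/- (Virial Theorem, eigenvector form) Let U be a unitary operator on a complex Hilbert space H which is of class C^1(A) for a self-adjoint operator A with dense domain D(A). If φ and ψ are eigenvectors of U associated with the same eigenvalue, then ⟨φ, (U*AU − A)ψ⟩ = 0. In particular, if φ is an eigenvector of U, then ⟨φ, (U*AU − A)φ⟩ = 0. -/
variable {H : Type} [NormedAddCommGroup H] [InnerProductSpace ℂ H] [CompleteSpace H]

/-- `C` is the bounded operator representing the commutator form
`F(φ,ψ) = ⟨Aφ, Bψ⟩ − ⟨φ, BAψ⟩` on `D(A) × D(A)`; its existence means `B ∈ C¹(A)`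
and then `C = ad_A(B) = [A,B]`. -/
def IsCommutatorOf (A : H →ₗ.[ℂ] H) (B C : H →L[ℂ] H) : Prop :=
  ∀ x y : A.domain,
    (inner ℂ (A x) (B (y : H)) : ℂ) - inner ℂ (x : H) (B (A y)) = inner ℂ (x : H) (C (y : H))

/-!
For `t > 0` let `S_t = (t + iA)⁻¹`; the operators `t S_t` have norm at most `1` and converge
strongly to the identity as `t → ∞`. The `C¹(A)` hypothesis says that `U` maps `D(A)` into
itself with `AU − UA = C` there, hence `U S_t = S_t U + i S_t C S_t`. Pairing this with
eigenvectors `φ`, `χ` of `U` for the same eigenvalue `μ`, and using `⟨φ, U v⟩ = μ ⟨φ, v⟩`,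
leaves `⟨φ, S_t C S_t χ⟩ = 0`; letting `t → ∞` gives `⟨φ, C χ⟩ = 0`, and
`⟨φ, U* C χ⟩ = μ̄ ⟨φ, C χ⟩`. The inverse `S_t` exists because `t + iA` is bounded below
(`‖(t + iA)x‖² = t²‖x‖² + ‖Ax‖²`), has closed range since the graph of `A` is closed, and
has dense range since `A* = A` has no eigenvalue `-it`.
-/

open Complex Filter Topology
open scoped InnerProductSpace

section StrongConvergence

variable {ι 𝕜 E F : Type*} [NontriviallyNormedField 𝕜] [SeminormedAddCommGroup E]
  [NormedSpace 𝕜 E] [SeminormedAddCommGroup F] [NormedSpace 𝕜 F] {l : Filter ι}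
  {R : ι → E →L[𝕜] F} {f : E →L[𝕜] F} {K : ℝ}

theorem tendsto_apply_of_tendsto_pointwise (hR : ∀ i, ‖R i‖ ≤ K)
    (hRf : ∀ z, Tendsto (fun i => R i z) l (𝓝 (f z))) {x : ι → E} {x₀ : E}
    (hx : Tendsto x l (𝓝 x₀)) : Tendsto (fun i => R i (x i)) l (𝓝 (f x₀)) := by
  have h0 : Tendsto (fun i => R i (x i - x₀)) l (𝓝 0) :=
    squeeze_zero_norm (fun i => (R i).le_of_opNorm_le (hR i) _)
      (by simpa using (hx.sub_const x₀).norm.const_mul K)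
  simpa using h0.add (hRf x₀)

theorem tendsto_pointwise_of_dense (hR : ∀ i, ‖R i‖ ≤ K) {s : Set E} (hs : Dense s)
    (hRs : ∀ z ∈ s, Tendsto (fun i => R i z) l (𝓝 (f z))) (z : E) :
    Tendsto (fun i => R i z) l (𝓝 (f z)) := by
  have hR' : Equicontinuous ((↑) ∘ R : ι → E → F) :=
    ((NormedSpace.equicontinuous_TFAE R).out 5 1).mp (⟨K, hR⟩ : ∃ C, ∀ i, ‖R i‖ ≤ C)
  have hclosed := hR'.isClosed_setOfPred_tendsto (l := l) f.continuous
  exact closure_minimal hRs hclosed (hs.closure_eq.symm ▸ Set.mem_univ z)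

end StrongConvergence

section Graph

variable {E : Type*} [NormedAddCommGroup E] [InnerProductSpace ℂ E]

theorem norm_ofReal_smul_add_I_smul_sq {x y : E} (t : ℝ) (h : ⟪y, x⟫_ℂ = ⟪x, y⟫_ℂ) :
    ‖(t : ℂ) • x + I • y‖ ^ 2 = ‖(t : ℂ) • x‖ ^ 2 + ‖y‖ ^ 2 := by
  have hre : (⟪x, y⟫_ℂ).im = 0 := by
    rw [← inner_conj_symm] at h
    exact Complex.conj_eq_iff_im.mp h
  rw [@norm_add_sq ℂ, norm_smul I, Complex.norm_I, one_mul, inner_smul_left, inner_smul_right]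
  simp [hre]

namespace LinearPMap

variable {A : E →ₗ.[ℂ] E}

/-- `t + iA : D(A) → H`, as a map on the graph of `A`. -/
def shiftGraphMap (A : E →ₗ.[ℂ] E) (t : ℝ) : A.graph →L[ℂ] E :=
  ((t : ℂ) • ContinuousLinearMap.fst ℂ E E + I • ContinuousLinearMap.snd ℂ E E).comp
    A.graph.subtypeL

@[simp]
theorem shiftGraphMap_apply (t : ℝ) (p : A.graph) :
    shiftGraphMap A t p = (t : ℂ) • (p : E × E).1 + I • (p : E × E).2 := rfl

/-- `S = (t + iA)⁻¹`. -/
structure IsShiftInverse (A : E →ₗ.[ℂ] E) (t : ℝ) (S : E →L[ℂ] E) : Prop where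
  apply_eq : ∀ {x y}, (x, y) ∈ A.graph → S ((t : ℂ) • x + I • y) = x
  exists_mem_graph : ∀ z, ∃ y, (S z, y) ∈ A.graph ∧ (t : ℂ) • S z + I • y = z

theorem IsShiftInverse.smul_apply_of_mem_graph {t : ℝ} {S : E →L[ℂ] E}
    (hS : IsShiftInverse A t S) {x y : E} (h : (x, y) ∈ A.graph) :
    (t : ℂ) • S x = x - I • S y := by
  have := hS.apply_eq h
  rw [S.map_add, S.map_smul, S.map_smul] at this
  exact eq_sub_of_add_eq this

variable [CompleteSpace E]

theorem mem_graph_iff_of_isSelfAdjoint (hA : IsSelfAdjoint A) {p : E × E} :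
    p ∈ A.graph ↔ ∀ a b, (a, b) ∈ A.graph → ⟪b, p.1⟫_ℂ - ⟪a, p.2⟫_ℂ = 0 := by
  conv_lhs => rw [← isSelfAdjoint_def.mp hA]
  rw [adjoint_graph_eq_graph_adjoint hA.dense_domain, Submodule.mem_adjoint_iff]

theorem inner_snd_fst_of_mem_graph (hA : IsSelfAdjoint A) {x y : E} (h : (x, y) ∈ A.graph) :
    ⟪y, x⟫_ℂ = ⟪x, y⟫_ℂ :=
  sub_eq_zero.mp ((mem_graph_iff_of_isSelfAdjoint hA).mp h x y h)

theorem norm_le_of_mem_graph (hA : IsSelfAdjoint A) {x y : E} (h : (x, y) ∈ A.graph) (t : ℝ) :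
    ‖(t : ℂ) • x‖ ≤ ‖(t : ℂ) • x + I • y‖ ∧ ‖y‖ ≤ ‖(t : ℂ) • x + I • y‖ := by
  have hsq := norm_ofReal_smul_add_I_smul_sq t (inner_snd_fst_of_mem_graph hA h)
  exact ⟨le_of_pow_le_pow_left₀ two_ne_zero (norm_nonneg _) (by nlinarith [sq_nonneg ‖y‖]),
    le_of_pow_le_pow_left₀ two_ne_zero (norm_nonneg _) (by nlinarith [sq_nonneg ‖(t : ℂ) • x‖])⟩

theorem norm_le_shiftGraphMap (hA : IsSelfAdjoint A) {t : ℝ} (ht : t ≠ 0) (p : A.graph) :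
    ‖p‖ ≤ max |t|⁻¹ 1 * ‖shiftGraphMap A t p‖ := by
  obtain ⟨h1, h2⟩ := norm_le_of_mem_graph hA p.2 t
  rw [norm_smul, Complex.norm_real, Real.norm_eq_abs, ← le_inv_mul_iff₀ (abs_pos.mpr ht)] at h1
  rw [max_mul_of_nonneg _ _ (norm_nonneg _), one_mul]
  exact max_le_max h1 h2

theorem ker_shiftGraphMap (hA : IsSelfAdjoint A) {t : ℝ} (ht : t ≠ 0) :
    (shiftGraphMap A t).ker = ⊥ := by
  refine LinearMap.ker_eq_bot'.mpr fun p hp => norm_le_zero_iff.mp ?_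
  have := norm_le_shiftGraphMap hA ht p
  rw [ContinuousLinearMap.coe_coe] at hp
  rwa [hp, norm_zero, mul_zero] at this

theorem isClosed_range_shiftGraphMap (hA : IsSelfAdjoint A) {t : ℝ} (ht : t ≠ 0) :
    _root_.IsClosed ((shiftGraphMap A t).range : Set E) := by
  rw [LinearMap.coe_range]
  have : CompleteSpace A.graph := IsClosed.completeSpace_coe (hs := hA.isClosed)
  exact ((shiftGraphMap A t).antilipschitz_of_bound (K := (max |t|⁻¹ 1).toNNReal)
    (by simpa using norm_le_shiftGraphMap hA ht)).isClosed_range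
    (shiftGraphMap A t).uniformContinuous

theorem orthogonal_range_shiftGraphMap (hA : IsSelfAdjoint A) {t : ℝ} (ht : t ≠ 0) :
    (shiftGraphMap A t).rangeᗮ = ⊥ := by
  refine (Submodule.eq_bot_iff _).mpr fun z hz => ?_
  have horth : ∀ x y, (x, y) ∈ A.graph → ⟪(t : ℂ) • x + I • y, z⟫_ℂ = 0 := fun x y h =>
    (Submodule.mem_orthogonal _ z).mp hz _ ⟨⟨(x, y), h⟩, rfl⟩
  -- `z ⊥ range` says `z ∈ D(A*) = D(A)` with `Az = -itz`.
  have hz_graph : (z, (-(I * t)) • z) ∈ A.graph := by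
    refine (mem_graph_iff_of_isSelfAdjoint hA).mpr fun a b hab => ?_
    have := horth a b hab
    simp only [inner_add_left, inner_smul_left, inner_smul_right, conj_ofReal, conj_I]
      at this ⊢
    linear_combination I * this + ⟪b, z⟫_ℂ * I_sq
  have := horth _ _ hz_graph
  have hconj : (starRingEnd ℂ) (-(I * t)) = I * t := by simp
  simp only [inner_add_left, inner_smul_left, conj_ofReal, conj_I, hconj] at this
  have h2 : (2 * t : ℂ) * ⟪z, z⟫_ℂ = 0 := by linear_combination this + t * ⟪z, z⟫_ℂ * I_sq
  have h2t : (2 * t : ℂ) ≠ 0 := by exact_mod_cast mul_ne_zero two_ne_zero ht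
  exact inner_self_eq_zero.mp ((mul_eq_zero.mp h2).resolve_left h2t)

theorem range_shiftGraphMap (hA : IsSelfAdjoint A) {t : ℝ} (ht : t ≠ 0) :
    (shiftGraphMap A t).range = ⊤ := by
  rw [← (isClosed_range_shiftGraphMap hA ht).submodule_topologicalClosure_eq,
    Submodule.topologicalClosure_eq_top_iff]
  exact orthogonal_range_shiftGraphMap hA ht

theorem exists_isShiftInverse (hA : IsSelfAdjoint A) {t : ℝ} (ht : t ≠ 0) :
    ∃ S : E →L[ℂ] E, IsShiftInverse A t S := by
  have : CompleteSpace A.graph := IsClosed.completeSpace_coe (hs := hA.isClosed)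
  let e := ContinuousLinearEquiv.ofBijective (shiftGraphMap A t) (ker_shiftGraphMap hA ht)
    (range_shiftGraphMap hA ht)
  refine ⟨(ContinuousLinearMap.fst ℂ E E).comp (A.graph.subtypeL.comp e.symm.toContinuousLinearMap),
    fun {x y} h => ?_, fun z => ⟨(e.symm z : E × E).2, (e.symm z).2, ?_⟩⟩
  · simpa [e] using congrArg (fun p : A.graph => (p : E × E).1) (e.symm_apply_apply ⟨(x, y), h⟩)
  · exact e.apply_symm_apply z

theorem IsShiftInverse.norm_smul_apply_le (hA : IsSelfAdjoint A) {t : ℝ} {S : E →L[ℂ] E}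
    (hS : IsShiftInverse A t S) (z : E) : ‖(t : ℂ) • S z‖ ≤ ‖z‖ := by
  obtain ⟨y, hy, hz⟩ := hS.exists_mem_graph z
  conv_rhs => rw [← hz]
  exact (norm_le_of_mem_graph hA hy t).1

theorem IsShiftInverse.norm_smul_le (hA : IsSelfAdjoint A) {t : ℝ} {S : E →L[ℂ] E}
    (hS : IsShiftInverse A t S) : ‖(t : ℂ) • S‖ ≤ 1 :=
  ContinuousLinearMap.opNorm_le_bound _ zero_le_one fun z => by
    simpa using hS.norm_smul_apply_le hA z

theorem tendsto_smul_apply_of_isShiftInverse (hA : IsSelfAdjoint A) {ι : Type*} {l : Filter ι}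
    {t : ι → ℝ} {S : ι → E →L[ℂ] E} (ht : Tendsto t l atTop)
    (hS : ∀ i, IsShiftInverse A (t i) (S i)) (z : E) :
    Tendsto (fun i => ((t i : ℂ) • S i) z) l (𝓝 z) := by
  refine tendsto_pointwise_of_dense (f := ContinuousLinearMap.id ℂ E)
    (fun i => (hS i).norm_smul_le hA) hA.dense_domain (fun x hx => ?_) z
  have hxy : (x, A ⟨x, hx⟩) ∈ A.graph := A.mem_graph ⟨x, hx⟩
  set y := A ⟨x, hx⟩
  have hS0 : Tendsto (fun i => S i y) l (𝓝 0) := by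
    refine squeeze_zero_norm' (a := fun i => ‖y‖ / t i) ?_ (tendsto_const_nhds.div_atTop ht)
    filter_upwards [ht.eventually_gt_atTop 0] with i hi
    have := (hS i).norm_smul_apply_le hA y
    rw [norm_smul, norm_real, Real.norm_of_nonneg hi.le] at this
    rwa [le_div_iff₀ hi, mul_comm]
  have hx_lim := (hS0.const_smul I).const_sub x
  simp only [smul_zero, sub_zero, ← (hS _).smul_apply_of_mem_graph hxy] at hx_lim
  exact hx_lim

end LinearPMap

end Graph

theorem inner_apply_eq_mul_of_mem_unitary {E : Type*} [NormedAddCommGroup E] [InnerProductSpace ℂ E]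
    [CompleteSpace E] {U : E →L[ℂ] E} (hU : U ∈ unitary (E →L[ℂ] E)) {μ : ℂ} {φ : E}
    (hφ : U φ = μ • φ) (v : E) : ⟪φ, U v⟫_ℂ = μ * ⟪φ, v⟫_ℂ := by
  rcases eq_or_ne φ 0 with rfl | hφ0
  · simp
  have hμ : ‖μ‖ = 1 := by
    have := ContinuousLinearMap.norm_map_of_mem_unitary hU φ
    rw [hφ, norm_smul] at this
    exact (mul_eq_right₀ (norm_ne_zero_iff.mpr hφ0)).mp this
  calc ⟪φ, U v⟫_ℂ = μ * ((starRingEnd ℂ) μ * ⟪φ, U v⟫_ℂ) := by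
        rw [← mul_assoc, RCLike.mul_conj, hμ]; simp
    _ = μ * ⟪U φ, U v⟫_ℂ := by rw [hφ, inner_smul_left]
    _ = μ * ⟪φ, v⟫_ℂ := by rw [ContinuousLinearMap.inner_map_map_of_mem_unitary hU]

namespace IsCommutatorOf

variable {A : H →ₗ.[ℂ] H} {B C : H →L[ℂ] H}

theorem mem_graph (hA : IsSelfAdjoint A) (hC : IsCommutatorOf A B C) {b q : H}
    (hbq : (b, q) ∈ A.graph) : (B b, B q + C b) ∈ A.graph := by
  obtain ⟨b', rfl, rfl⟩ := (A.mem_graph_iff).mp hbq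
  refine (A.mem_graph_iff_of_isSelfAdjoint hA).mpr fun a p hap => ?_
  obtain ⟨a', rfl, rfl⟩ := (A.mem_graph_iff).mp hap
  rw [inner_add_right, ← hC a' b']
  ring

theorem apply_shiftInverse_eq (hA : IsSelfAdjoint A) (hC : IsCommutatorOf A B C) {t : ℝ}
    {S : H →L[ℂ] H} (hS : A.IsShiftInverse t S) (z : H) :
    B (S z) = S (B z) + I • S (C (S z)) := by
  obtain ⟨y, hy, hz⟩ := hS.exists_mem_graph z
  calc B (S z) = S ((t : ℂ) • B (S z) + I • (B y + C (S z))) :=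
        (hS.apply_eq (hC.mem_graph hA hy)).symm
    _ = S (B ((t : ℂ) • S z + I • y) + I • C (S z)) := by
        rw [B.map_add, B.map_smul, B.map_smul, smul_add, add_assoc]
    _ = S (B z) + I • S (C (S z)) := by rw [hz, map_add, map_smul]

theorem inner_eq_zero_of_eigenvector (hA : IsSelfAdjoint A) (hB : B ∈ unitary (H →L[ℂ] H))
    (hC : IsCommutatorOf A B C) {μ : ℂ} {φ χ : H} (hφ : B φ = μ • φ) (hχ : B χ = μ • χ) :
    ⟪φ, C χ⟫_ℂ = 0 := by
  choose S hS using fun n : ℕ => A.exists_isShiftInverse hA (t := n + 1) (by positivity)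
  set R : ℕ → H →L[ℂ] H := fun n => ((n + 1 : ℝ) : ℂ) • S n
  have hR : ∀ z, Tendsto (fun n => R n z) atTop (𝓝 z) :=
    A.tendsto_smul_apply_of_isShiftInverse hA
      (tendsto_natCast_atTop_atTop.atTop_add tendsto_const_nhds) hS
  have hRCR : Tendsto (fun n => R n (C (R n χ))) atTop (𝓝 (C χ)) :=
    tendsto_apply_of_tendsto_pointwise (f := ContinuousLinearMap.id ℂ H)
      (fun n => (hS n).norm_smul_le hA) hR ((C.continuous.tendsto χ).comp (hR χ))
  have hzero : ∀ n, ⟪φ, R n (C (R n χ))⟫_ℂ = 0 := by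
    intro n
    have h := congrArg (⟪φ, ·⟫_ℂ) (hC.apply_shiftInverse_eq hA (hS n) χ)
    simp only [hχ, map_smul, inner_add_right, inner_smul_right,
      inner_apply_eq_mul_of_mem_unitary hB hφ] at h
    have h0 : ⟪φ, S n (C (S n χ))⟫_ℂ = 0 := by simpa using h
    simp [R, h0]
  exact tendsto_nhds_unique (tendsto_const_nhds.inner hRCR) (by simp [hzero])

end IsCommutatorOf

theorem stmt_1_general (A : H →ₗ.[ℂ] H) (hA : IsSelfAdjoint A)
    (U : H →L[ℂ] H) (hU : U ∈ unitary (H →L[ℂ] H))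
    (C : H →L[ℂ] H) (hC : IsCommutatorOf A U C)
    (μ : ℂ) (φ ψ : H)
    (hφ : U φ = μ • φ) (hψ : U ψ = μ • ψ) :
    (inner ℂ φ ((star U * C) ψ) : ℂ) = 0 ∧ (inner ℂ φ ((star U * C) φ) : ℂ) = 0 := by
  have key : ∀ χ, U χ = μ • χ → ⟪φ, (star U * C) χ⟫_ℂ = 0 := fun χ hχ => by
    rw [mul_apply_eq_comp, ContinuousLinearMap.star_eq_adjoint,
      ContinuousLinearMap.adjoint_inner_right, hφ, inner_smul_left,
      hC.inner_eq_zero_of_eigenvector hA hU hφ hχ, mul_zero]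
  exact ⟨key ψ hψ, key φ hφ⟩

/-- Virial theorem (eigenvector form): if `U` is unitary, `U ∈ C¹(A)` with
`ad_A U = C`, so that `U*AU − A = U* ∘ C`, and `φ, ψ` are eigenvectors of `U` for the same
eigenvalue `μ`, then `⟨φ, (U*AU − A)ψ⟩ = 0`; in particular `⟨φ, (U*AU − A)φ⟩ = 0`. -/
theorem stmt_1 (A : H →ₗ.[ℂ] H) (hA : IsSelfAdjoint A)
    (U : H →L[ℂ] H) (hU : U ∈ unitary (H →L[ℂ] H))
    (C : H →L[ℂ] H) (hC : IsCommutatorOf A U C)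
    (μ : ℂ) (φ ψ : H) (hφ0 : φ ≠ 0) (hψ0 : ψ ≠ 0)
    (hφ : U φ = μ • φ) (hψ : U ψ = μ • ψ) :
    (inner ℂ φ ((star U * C) ψ) : ℂ) = 0 ∧ (inner ℂ φ ((star U * C) φ) : ℂ) = 0 :=
  stmt_1_general A hA U hU C hC μ φ ψ hφ hψ
end

section
/- Let U be a unitary operator on a complex Hilbert space H which is of class C^1(A) for a self-adjoint operator A with dense domain D(A). Assume U is weakly propagating with respect to A, i.e. the bounded operator U*AU − A is non-negative and injective. Then U has no eigenvalues (its pure point spectrum is empty). -/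
variable {H : Type} [NormedAddCommGroup H] [InnerProductSpace ℂ H] [CompleteSpace H]

/-!
For an eigenvector `U φ = μ φ` the virial identity `⟪φ, C φ⟫ = ⟪φ, (AU - UA) φ⟫ = 0` is formal
only when `φ ∈ D(A)`, so `φ` is regularised by `ψₙ = i tₙ (A + i tₙ)⁻¹ φ → φ` with `tₙ → ∞`.
Then `ηₙ = (U - μ) ψₙ` solves `(A + i tₙ) ηₙ = C ψₙ`, so `ηₙ → 0` while `A ηₙ` stays bounded,
whence `A ηₙ → 0` weakly; as `ηₙ ⊥ φ`, `⟪φ, C ψₙ⟫ = ⟪φ, A ηₙ⟫ → 0`, i.e. `⟪φ, C φ⟫ = 0`.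
Hence `⟪φ, U* C φ⟫ = μ̄ ⟪φ, C φ⟫ = 0`, which for the positive operator `U* C` means `U* C φ = 0`,
and injectivity gives `φ = 0`.
-/

open scoped InnerProductSpace ComplexConjugate
open Filter Topology Complex

theorem Dense.tendsto_zero_of_forall_norm_le {X F ι : Type*} [PseudoMetricSpace X]
    [SeminormedAddCommGroup F] {l : Filter ι} {S : Set X} (hS : Dense S) (y : X) {a : ι → F}
    {b : ι → ℝ} (hb : Tendsto b l (𝓝 0)) (c : ℝ)
    (h : ∀ χ ∈ S, ∃ K, ∀ᶠ i in l, ‖a i‖ ≤ c * dist y χ + K * b i) :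
    Tendsto a l (𝓝 0) := by
  refine Metric.tendsto_nhds.2 fun ε hε => ?_
  obtain ⟨χ, hχS, hχ⟩ := hS.exists_dist_lt y (ε := ε / (2 * (|c| + 1))) (by positivity)
  obtain ⟨K, hK⟩ := h χ hχS
  have hKb : ∀ᶠ i in l, dist (K * b i) 0 < ε / 2 := by
    refine Metric.tendsto_nhds.1 ?_ (ε / 2) (half_pos hε)
    simpa using hb.const_mul K
  have hcχ : c * dist y χ < ε / 2 := by
    rw [lt_div_iff₀ (by positivity)] at hχ
    nlinarith [le_abs_self c, dist_nonneg (x := y) (y := χ)]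
  filter_upwards [hK, hKb] with i hi hKi
  rw [Real.dist_0_eq_abs] at hKi
  rw [dist_zero_right]
  linarith [le_abs_self (K * b i)]

namespace LinearPMap

variable {E : Type*} [NormedAddCommGroup E] [InnerProductSpace ℂ E] (A : E →ₗ.[ℂ] E)

/-- `(x, v) ↦ v + i t x` on the graph of `A`: a bounded model of `A + i t`. -/
noncomputable def graphAddISMul (t : ℝ) : A.graph →L[ℂ] E :=
  (ContinuousLinearMap.snd ℂ E E + (t * I) • ContinuousLinearMap.fst ℂ E E).comp A.graph.subtypeL

theorem graphAddISMul_apply (t : ℝ) (p : A.graph) :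
    A.graphAddISMul t p = (p : E × E).2 + (t * I) • (p : E × E).1 :=
  rfl

end LinearPMap

section SelfAdjoint

open LinearPMap

variable {E : Type*} [NormedAddCommGroup E] [InnerProductSpace ℂ E] [CompleteSpace E]
  {A : E →ₗ.[ℂ] E}

theorem IsSelfAdjoint.mem_graph_iff (hA : IsSelfAdjoint A) {x v : E} :
    (x, v) ∈ A.graph ↔ ∀ y w, (y, w) ∈ A.graph → ⟪v, y⟫_ℂ = ⟪x, w⟫_ℂ := by
  have hAA : A† = A := hA
  constructor
  · intro hxv y w hyw
    have hsymm := adjoint_isFormalAdjoint hA.dense_domain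
    rw [hAA] at hsymm
    simp only [LinearPMap.mem_graph_iff] at hxv hyw
    obtain ⟨x', rfl, rfl⟩ := hxv
    obtain ⟨y', rfl, rfl⟩ := hyw
    exact hsymm x' y'
  · intro h
    have h' : ∀ u : A.domain, ⟪v, (u : E)⟫_ℂ = ⟪x, A u⟫_ℂ := fun u => h _ _ (A.mem_graph u)
    rw [← hAA]
    have hx : x ∈ A†.domain := mem_adjoint_domain_of_exists x ⟨v, h'⟩
    exact (LinearPMap.mem_graph_iff _).2
      ⟨⟨x, hx⟩, rfl, adjoint_apply_eq hA.dense_domain ⟨x, hx⟩ h'⟩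

variable (hA : IsSelfAdjoint A)
include hA

theorem IsSelfAdjoint.norm_add_I_smul_sq_of_mem_graph (t : ℝ) {x v : E}
    (hxv : (x, v) ∈ A.graph) : ‖v + (t * I) • x‖ ^ 2 = ‖v‖ ^ 2 + t ^ 2 * ‖x‖ ^ 2 := by
  have hreal : conj ⟪v, x⟫_ℂ = ⟪v, x⟫_ℂ := by
    rw [inner_conj_symm]; exact (hA.mem_graph_iff.1 hxv x v hxv).symm
  have hre : RCLike.re ⟪v, (t * I) • x⟫_ℂ = 0 := by
    rw [inner_smul_right]
    simp [Complex.conj_eq_iff_im.1 hreal]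
  rw [@norm_add_sq ℂ, hre, norm_smul]
  simp [mul_pow, sq_abs]

theorem IsSelfAdjoint.abs_mul_norm_le_norm_add_I_smul_of_mem_graph (t : ℝ) {x v : E}
    (hxv : (x, v) ∈ A.graph) : |t| * ‖x‖ ≤ ‖v + (t * I) • x‖ := by
  refine le_of_sq_le_sq ?_ (norm_nonneg _)
  rw [hA.norm_add_I_smul_sq_of_mem_graph t hxv, mul_pow, sq_abs]
  nlinarith [sq_nonneg ‖v‖]

theorem IsSelfAdjoint.norm_le_norm_add_I_smul_of_mem_graph (t : ℝ) {x v : E}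
    (hxv : (x, v) ∈ A.graph) : ‖v‖ ≤ ‖v + (t * I) • x‖ := by
  refine le_of_sq_le_sq ?_ (norm_nonneg _)
  rw [hA.norm_add_I_smul_sq_of_mem_graph t hxv]
  nlinarith [sq_nonneg t, sq_nonneg ‖x‖]

theorem IsSelfAdjoint.norm_le_of_mem_graph_add_I_smul_eq {t : ℝ} (ht : t ≠ 0) {x v y : E}
    (hxv : (x, v) ∈ A.graph) (heq : v + (t * I) • x = (t * I) • y) : ‖x‖ ≤ ‖y‖ := by
  have h := hA.abs_mul_norm_le_norm_add_I_smul_of_mem_graph t hxv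
  rw [heq, norm_smul, show ‖(t : ℂ) * I‖ = |t| by simp] at h
  exact le_of_mul_le_mul_left h (abs_pos.2 ht)

theorem IsSelfAdjoint.eq_zero_of_mem_graph_I_smul {t : ℝ} (ht : t ≠ 0) {z : E}
    (hz : (z, (t * I) • z) ∈ A.graph) : z = 0 := by
  have h := hA.abs_mul_norm_le_norm_add_I_smul_of_mem_graph (-t) hz
  rw [← add_smul, Complex.ofReal_neg, neg_mul, add_neg_cancel, zero_smul, norm_zero,
    abs_neg] at h
  exact norm_le_zero_iff.1 <| nonpos_of_mul_nonpos_right h (abs_pos.2 ht)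

theorem IsSelfAdjoint.isClosed_range_graphAddISMul {t : ℝ} (ht : t ≠ 0) :
    IsClosed (LinearMap.range (A.graphAddISMul t).toLinearMap : Set E) := by
  have : CompleteSpace A.graph := hA.isClosed.completeSpace_coe
  have hanti : AntilipschitzWith ⟨max 1 |t|⁻¹, by positivity⟩ (A.graphAddISMul t) := by
    refine ContinuousLinearMap.antilipschitz_of_bound _ fun ⟨(x, v), hxv⟩ => ?_
    show max ‖x‖ ‖v‖ ≤ max 1 |t|⁻¹ * ‖v + (t * I) • x‖
    refine max_le ?_ ?_
    · calc ‖x‖ ≤ |t|⁻¹ * ‖v + (t * I) • x‖ := by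
            rw [le_inv_mul_iff₀ (abs_pos.2 ht)]
            exact hA.abs_mul_norm_le_norm_add_I_smul_of_mem_graph t hxv
        _ ≤ _ := by gcongr; exact le_max_right _ _
    · exact (hA.norm_le_norm_add_I_smul_of_mem_graph t hxv).trans
        (le_mul_of_one_le_left (norm_nonneg _) (le_max_left _ _))
  rw [LinearMap.coe_range]
  exact hanti.isClosed_range (A.graphAddISMul t).uniformContinuous

theorem IsSelfAdjoint.range_graphAddISMul {t : ℝ} (ht : t ≠ 0) :
    LinearMap.range (A.graphAddISMul t).toLinearMap = ⊤ := by
  rw [← (hA.isClosed_range_graphAddISMul ht).submodule_topologicalClosure_eq,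
    Submodule.topologicalClosure_eq_top_iff, Submodule.eq_bot_iff]
  refine fun z hz => hA.eq_zero_of_mem_graph_I_smul ht <| hA.mem_graph_iff.2 fun u w huw => ?_
  have h := (Submodule.mem_orthogonal' _ z).1 hz (A.graphAddISMul t ⟨(u, w), huw⟩)
    (LinearMap.mem_range_self _ _)
  rw [graphAddISMul_apply, inner_add_right, inner_smul_right] at h
  rw [inner_smul_left]
  simp only [map_mul, conj_ofReal, conj_I, mul_neg, neg_mul]
  linear_combination -h

theorem IsSelfAdjoint.exists_mem_graph_add_I_smul_eq {t : ℝ} (ht : t ≠ 0) (y : E) :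
    ∃ x v, (x, v) ∈ A.graph ∧ v + (t * I) • x = y := by
  obtain ⟨⟨⟨x, v⟩, hxv⟩, hp⟩ : y ∈ LinearMap.range (A.graphAddISMul t).toLinearMap :=
    hA.range_graphAddISMul ht ▸ Submodule.mem_top
  exact ⟨x, v, hxv, hp⟩

theorem IsSelfAdjoint.tendsto_of_mem_graph_add_I_smul_eq {ι : Type*} {l : Filter ι}
    {t : ι → ℝ} (ht : Tendsto (fun i => |t i|) l atTop) {x v : ι → E}
    (hxv : ∀ i, (x i, v i) ∈ A.graph) (y : E) (heq : ∀ i, v i + (t i * I) • x i = (t i * I) • y) :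
    Tendsto x l (𝓝 y) := by
  rw [← tendsto_sub_nhds_zero_iff]
  refine hA.dense_domain.tendsto_zero_of_forall_norm_le y ht.inv_tendsto_atTop 2
    fun χ hχ => ⟨‖A ⟨χ, hχ⟩‖, ?_⟩
  filter_upwards [ht.eventually_gt_atTop 0] with i hti
  set w := A ⟨χ, hχ⟩
  have hdiff : (x i - χ, v i - w) ∈ A.graph := A.graph.sub_mem (hxv i) (A.mem_graph ⟨χ, hχ⟩)
  have hrhs : v i - w + (t i * I) • (x i - χ) = (t i * I) • (y - χ) - w := by
    rw [smul_sub, smul_sub, ← heq i]; abel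
  have hxχ : ‖x i - χ‖ ≤ ‖y - χ‖ + ‖w‖ * |t i|⁻¹ := by
    refine le_of_mul_le_mul_left ?_ hti
    calc |t i| * ‖x i - χ‖ ≤ ‖(t i * I) • (y - χ) - w‖ := by
          rw [← hrhs]; exact hA.abs_mul_norm_le_norm_add_I_smul_of_mem_graph (t i) hdiff
      _ ≤ |t i| * ‖y - χ‖ + ‖w‖ := by
          refine (norm_sub_le _ _).trans_eq ?_
          rw [norm_smul, show ‖(t i : ℂ) * I‖ = |t i| by simp]
      _ = |t i| * (‖y - χ‖ + ‖w‖ * |t i|⁻¹) := by field_simp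
  rw [Pi.inv_apply, dist_eq_norm]
  linarith [norm_sub_le_norm_sub_add_norm_sub (x i) χ y, norm_sub_rev χ y]

theorem IsSelfAdjoint.tendsto_inner_of_mem_graph {ι : Type*} {l : Filter ι} {x v : ι → E}
    (hxv : ∀ i, (x i, v i) ∈ A.graph) (hx : Tendsto x l (𝓝 0)) {K : ℝ} (hv : ∀ i, ‖v i‖ ≤ K)
    (φ : E) : Tendsto (fun i => ⟪φ, v i⟫_ℂ) l (𝓝 0) := by
  refine hA.dense_domain.tendsto_zero_of_forall_norm_le φ (by simpa using hx.norm) K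
    fun χ hχ => ⟨‖A ⟨χ, hχ⟩‖, Eventually.of_forall fun i => ?_⟩
  have hsymm : ⟪χ, v i⟫_ℂ = ⟪A ⟨χ, hχ⟩, x i⟫_ℂ :=
    (hA.mem_graph_iff.1 (A.mem_graph ⟨χ, hχ⟩) _ _ (hxv i)).symm
  calc ‖⟪φ, v i⟫_ℂ‖ = ‖⟪φ - χ, v i⟫_ℂ + ⟪A ⟨χ, hχ⟩, x i⟫_ℂ‖ := by
        rw [← hsymm, inner_sub_left, sub_add_cancel]
    _ ≤ ‖φ - χ‖ * ‖v i‖ + ‖A ⟨χ, hχ⟩‖ * ‖x i‖ :=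
        (norm_add_le _ _).trans (add_le_add (norm_inner_le_norm _ _) (norm_inner_le_norm _ _))
    _ ≤ K * dist φ χ + ‖A ⟨χ, hχ⟩‖ * ‖x i‖ := by
        rw [dist_eq_norm, mul_comm K]; gcongr; exact hv i

end SelfAdjoint

namespace ContinuousLinearMap

theorem star_apply_eq_conj_smul_of_mem_unitary {𝕜 E : Type*} [RCLike 𝕜] [NormedAddCommGroup E]
    [InnerProductSpace 𝕜 E] [CompleteSpace E] {U : E →L[𝕜] E} (hU : U ∈ unitary (E →L[𝕜] E))
    {μ : 𝕜} {φ : E} (hφ : U φ = μ • φ) : star U φ = conj μ • φ := by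
  rcases eq_or_ne φ 0 with rfl | hφ0
  · simp
  have hμ : ‖μ‖ = 1 := by
    have := norm_map_of_mem_unitary hU φ
    rwa [hφ, norm_smul, mul_eq_right₀ (norm_ne_zero_iff.2 hφ0)] at this
  have hinv : μ • star U φ = φ := by
    rw [← map_smul, ← hφ, ← mul_apply_eq_comp, Unitary.star_mul_self_of_mem hU, one_apply_eq_self]
  calc star U φ = (conj μ * μ) • star U φ := by rw [RCLike.conj_mul, hμ]; simp
    _ = conj μ • φ := by rw [mul_smul, hinv]

theorem IsPositive.apply_eq_zero_of_inner_self_eq_zero {E : Type*} [NormedAddCommGroup E]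
    [InnerProductSpace ℂ E] [CompleteSpace E] {T : E →L[ℂ] E} (hT : T.IsPositive) {x : E}
    (hx : ⟪x, T x⟫_ℂ = 0) : T x = 0 := by
  obtain ⟨S, rfl⟩ := CStarAlgebra.nonneg_iff_eq_star_mul_self.mp ((nonneg_iff_isPositive T).2 hT)
  rw [mul_apply_eq_comp, star_eq_adjoint, adjoint_inner_right, inner_self_eq_zero] at hx
  rw [mul_apply_eq_comp, hx, map_zero]

end ContinuousLinearMap

theorem IsCommutatorOf.mem_graph_s2 {A : H →ₗ.[ℂ] H} (hA : IsSelfAdjoint A) {B C : H →L[ℂ] H}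
    (hC : IsCommutatorOf A B C) {x v : H} (hxv : (x, v) ∈ A.graph) :
    (B x, B v + C x) ∈ A.graph := by
  refine hA.mem_graph_iff.2 fun y w hyw => ?_
  simp only [LinearPMap.mem_graph_iff] at hxv hyw
  obtain ⟨x', rfl, rfl⟩ := hxv
  obtain ⟨y', rfl, rfl⟩ := hyw
  have := congrArg conj (hC y' x')
  simp only [map_sub, inner_conj_symm] at this
  rw [inner_add_left]
  linear_combination -this

theorem IsCommutatorOf.mem_graph_apply_sub_smul {A : H →ₗ.[ℂ] H} (hA : IsSelfAdjoint A)
    {U C : H →L[ℂ] H} (hC : IsCommutatorOf A U C) {μ : ℂ} {φ : H} (hφ : U φ = μ • φ) (s : ℂ)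
    {ψ w : H} (hψ : (ψ, w) ∈ A.graph) (hw : w + s • ψ = s • φ) :
    (U ψ - μ • ψ, C ψ - s • (U ψ - μ • ψ)) ∈ A.graph := by
  convert A.graph.sub_mem (hC.mem_graph_s2 hA hψ) (A.graph.smul_mem μ hψ) using 1
  refine Prod.ext rfl ?_
  simp only [Prod.snd_sub, Prod.smul_snd]
  rw [eq_sub_of_add_eq hw, map_sub, map_smul, map_smul, hφ]
  module

theorem IsCommutatorOf.inner_apply_self_eq_zero_of_apply_eq_smul {A : H →ₗ.[ℂ] H}
    (hA : IsSelfAdjoint A) {U C : H →L[ℂ] H} (hU : U ∈ unitary (H →L[ℂ] H))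
    (hC : IsCommutatorOf A U C) {μ : ℂ} {φ : H} (hφ : U φ = μ • φ) : ⟪φ, C φ⟫_ℂ = 0 := by
  set t : ℕ → ℝ := fun n => n + 1
  have ht : Tendsto (fun n => |t n|) atTop atTop :=
    tendsto_abs_atTop_atTop.comp (tendsto_atTop_add_const_right _ 1 tendsto_natCast_atTop_atTop)
  choose ψ w hψ hψeq using fun n =>
    hA.exists_mem_graph_add_I_smul_eq (t := t n) (Nat.cast_add_one_ne_zero n) ((t n * I) • φ)
  have hψφ : Tendsto ψ atTop (𝓝 φ) := hA.tendsto_of_mem_graph_add_I_smul_eq ht hψ φ hψeq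
  set η := fun n => U (ψ n) - μ • ψ n
  have hη n : (η n, C (ψ n) - (t n * I) • η n) ∈ A.graph :=
    hC.mem_graph_apply_sub_smul hA hφ _ (hψ n) (hψeq n)
  have hη0 : Tendsto η atTop (𝓝 0) := by
    have := ((U.continuous.tendsto φ).comp hψφ).sub (hψφ.const_smul μ)
    rwa [hφ, sub_self] at this
  have hAη n : ‖C (ψ n) - (t n * I) • η n‖ ≤ ‖C‖ * ‖φ‖ := by
    refine (hA.norm_le_norm_add_I_smul_of_mem_graph (t n) (hη n)).trans ?_
    rw [sub_add_cancel]
    exact C.le_opNorm_of_le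
      (hA.norm_le_of_mem_graph_add_I_smul_eq (Nat.cast_add_one_ne_zero n) (hψ n) (hψeq n))
  have hφη n : ⟪φ, η n⟫_ℂ = 0 := by
    rw [inner_sub_right, inner_smul_right, ← ContinuousLinearMap.adjoint_inner_left,
      ← ContinuousLinearMap.star_eq_adjoint,
      ContinuousLinearMap.star_apply_eq_conj_smul_of_mem_unitary hU hφ, inner_smul_left,
      RCLike.conj_conj, sub_self]
  have hlim : Tendsto (fun n => ⟪φ, C (ψ n)⟫_ℂ) atTop (𝓝 0) := by
    refine (hA.tendsto_inner_of_mem_graph hη hη0 hAη φ).congr fun n => ?_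
    rw [inner_sub_right, inner_smul_right, hφη, mul_zero, sub_zero]
  exact tendsto_nhds_unique (tendsto_const_nhds.inner ((C.continuous.tendsto φ).comp hψφ)) hlim

/-- If the unitary `U` is of class `C¹(A)` and weakly propagating with respect to `A`,
i.e. `U*AU − A = U* ∘ (ad_A U)` is non-negative and injective, then `U` has no
eigenvalues: its pure point spectrum is empty. -/
theorem stmt_2 (A : H →ₗ.[ℂ] H) (hA : IsSelfAdjoint A)
    (U : H →L[ℂ] H) (hU : U ∈ unitary (H →L[ℂ] H))
    (C : H →L[ℂ] H) (hC : IsCommutatorOf A U C)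
    (hpos : (star U * C).IsPositive) (hinj : Function.Injective (star U * C)) :
    ∀ (μ : ℂ) (φ : H), U φ = μ • φ → φ = 0 := by
  intro μ φ hφ
  refine hinj ?_
  rw [map_zero]
  refine hpos.apply_eq_zero_of_inner_self_eq_zero ?_
  rw [mul_apply_eq_comp, ContinuousLinearMap.star_eq_adjoint,
    ContinuousLinearMap.adjoint_inner_right, hφ, inner_smul_left,
    hC.inner_apply_self_eq_zero_of_apply_eq_smul hA hU hφ, mul_zero]
end

section
/- Let A be a self-adjoint operator on a complex Hilbert space H with dense domain D(A). If a bounded operator B on H is of class C^1(A), then B maps D(A) into D(A). -/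
variable {H : Type} [NormedAddCommGroup H] [InnerProductSpace ℂ H] [CompleteSpace H]

/-- `B` is of class `C^1(A)`. -/
def MemC1 (A : H →ₗ.[ℂ] H) (B : H →L[ℂ] H) : Prop := ∃ C, IsCommutatorOf A B C

namespace IsCommutatorOf

variable {E : Type} [NormedAddCommGroup E] [InnerProductSpace ℂ E]
  {A : E →ₗ.[ℂ] E} {B C : E →L[ℂ] E}

theorem inner_apply_apply_eq (hC : IsCommutatorOf A B C) (x y : A.domain) :
    inner ℂ (A y) (B (x : E)) = inner ℂ (y : E) (B (A x) + C x) := by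
  rw [inner_add_right]
  linear_combination hC y x

theorem apply_mem_adjoint_domain [CompleteSpace E] (hC : IsCommutatorOf A B C) (x : A.domain) :
    B (x : E) ∈ A.adjoint.domain :=
  A.mem_adjoint_domain_of_exists _ ⟨B (A x) + C x, fun y => by
    rw [← inner_conj_symm, ← hC.inner_apply_apply_eq, inner_conj_symm]⟩

end IsCommutatorOf

/-- If a bounded operator `B` is of class `C¹(A)` for a densely defined self-adjoint
operator `A`, then `B` maps `D(A)` into `D(A)`. -/
theorem stmt_3 (A : H →ₗ.[ℂ] H) (hA : IsSelfAdjoint A)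
    (B : H →L[ℂ] H) (hB : MemC1 A B) :
    ∀ x : H, x ∈ A.domain → B x ∈ A.domain := by
  obtain ⟨C, hC⟩ := hB
  intro x hx
  rw [← LinearPMap.isSelfAdjoint_def.mp hA]
  exact IsCommutatorOf.apply_mem_adjoint_domain hC ⟨x, hx⟩
end

section
/- Let k ∈ ℕ, k ≥ 1, and let U be a unitary operator on H. The following assertions are equivalent: (a) U ∈ C^k(A); (b) U* ∈ C^k(A); (c) U ∈ C^1(A) and the bounded operator U*AU − A = U*(ad_A U) belongs to C^{k−1}(A); (d) U ∈ C^1(A) and the bounded operator A − UAU* = (ad_A U)U* belongs to C^{k−1}(A). -/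
/-!
A self-adjoint `A` is maximal among symmetric operators, so the commutator form of `B` is bounded,
with operator `C`, exactly when `B` maps `D(A)` into itself and `A B = B A + C` there. In this
form the Leibniz rule `ad_A(BB') = B ad_A(B') + ad_A(B) B'` and `ad_A(B*) = -(ad_A B)*` are
immediate, so `C^k(A)` is a `*`-subalgebra. Hence `U ∈ C^k(A) ↔ U* ∈ C^k(A)`, and if
`U ∈ C^k(A)` then `U*(ad_A U)` and `(ad_A U)U*` lie in `C^{k-1}(A)`. Conversely, writing
`ad_A U = U (U* ad_A U)` and inducting on `k`, `U ∈ C^{k-1}(A)` already gives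
`ad_A U ∈ C^{k-1}(A)`, i.e. `U ∈ C^k(A)`.
-/

variable {H : Type} [NormedAddCommGroup H] [InnerProductSpace ℂ H] [CompleteSpace H]

/-- `D` is a chain of iterated commutators for `B` of length `k`. -/
def IsAdChain (A : H →ₗ.[ℂ] H) (B : H →L[ℂ] H) (D : ℕ → H →L[ℂ] H) (k : ℕ) : Prop :=
  D 0 = B ∧ ∀ j < k, IsCommutatorOf A (D j) (D (j + 1))

/-- `B` is of class `C^k(A)`. -/
def MemCk (A : H →ₗ.[ℂ] H) (B : H →L[ℂ] H) (k : ℕ) : Prop := ∃ D, IsAdChain A B D k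

section SelfAdjoint

variable {𝕜 E : Type*} [RCLike 𝕜] [NormedAddCommGroup E] [InnerProductSpace 𝕜 E]
  [CompleteSpace E] {A : E →ₗ.[𝕜] E}

theorem IsSelfAdjoint.isFormalAdjoint_self (hA : IsSelfAdjoint A) : A.IsFormalAdjoint A := by
  have h := LinearPMap.adjoint_isFormalAdjoint hA.dense_domain (T := A)
  rwa [LinearPMap.isSelfAdjoint_def.1 hA] at h

theorem IsSelfAdjoint.exists_mem_domain_of_inner_eq (hA : IsSelfAdjoint A) {y z : E}
    (h : ∀ x : A.domain, inner 𝕜 (A x) y = inner 𝕜 (x : E) z) :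
    ∃ hy : y ∈ A.domain, A ⟨y, hy⟩ = z := by
  have h' : ∀ x : A.domain, inner 𝕜 z (x : E) = inner 𝕜 y (A x) := fun x => by
    rw [← inner_conj_symm, ← h x, inner_conj_symm]
  have hy : y ∈ A.adjoint.domain := LinearPMap.mem_adjoint_domain_of_exists y ⟨z, h'⟩
  obtain ⟨hdom, hval⟩ := LinearPMap.ext_iff.1 (LinearPMap.isSelfAdjoint_def.1 hA)
  refine ⟨hdom ▸ hy, ?_⟩
  rw [← hval (hf := hy), LinearPMap.adjoint_apply_eq hA.dense_domain ⟨y, hy⟩ h']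

end SelfAdjoint

section Commutator

variable {E : Type} [NormedAddCommGroup E] [InnerProductSpace ℂ E]

namespace IsCommutatorOf

variable {A : E →ₗ.[ℂ] E} {B B' C C' : E →L[ℂ] E}

theorem iff_of_isSelfAdjoint [CompleteSpace E] (hA : IsSelfAdjoint A) :
    IsCommutatorOf A B C ↔
      ∀ y : A.domain, ∃ hy : B y ∈ A.domain, A ⟨B y, hy⟩ = B (A y) + C y := by
  constructor
  · intro h y
    refine hA.exists_mem_domain_of_inner_eq fun x => ?_
    rw [inner_add_right]
    linear_combination h x y
  · intro h x y
    obtain ⟨hy, hAB⟩ := h y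
    rw [hA.isFormalAdjoint_self x ⟨B y, hy⟩, hAB, inner_add_right]
    ring

theorem add (h : IsCommutatorOf A B C) (h' : IsCommutatorOf A B' C') :
    IsCommutatorOf A (B + B') (C + C') := fun x y => by
  simp only [add_apply, inner_add_right]
  linear_combination h x y + h' x y

theorem neg (h : IsCommutatorOf A B C) : IsCommutatorOf A (-B) (-C) := fun x y => by
  simp only [neg_apply, inner_neg_right]
  linear_combination -h x y

theorem star [CompleteSpace E] (h : IsCommutatorOf A B C) :
    IsCommutatorOf A (star B) (-star C) := fun x y => by
  have hyx := congrArg (starRingEnd ℂ) (h y x)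
  simp only [map_sub, inner_conj_symm] at hyx
  simp only [neg_apply, inner_neg_right, ContinuousLinearMap.star_eq_adjoint,
    ContinuousLinearMap.adjoint_inner_right]
  linear_combination -hyx

theorem mul [CompleteSpace E] (hA : IsSelfAdjoint A) (h : IsCommutatorOf A B C)
    (h' : IsCommutatorOf A B' C') :
    IsCommutatorOf A (B * B') (B * C' + C * B') := by
  rw [iff_of_isSelfAdjoint hA] at h h' ⊢
  intro y
  obtain ⟨hy', hAB'⟩ := h' y
  obtain ⟨hy, hAB⟩ := h ⟨B' y, hy'⟩
  refine ⟨hy, ?_⟩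
  change A ⟨B (B' y), hy⟩ = _
  rw [hAB]
  simp only [hAB', add_apply, map_add]
  abel

end IsCommutatorOf

namespace MemCk

variable {A : E →ₗ.[ℂ] E} {B B' : E →L[ℂ] E} {j k : ℕ}

theorem zero : MemCk A B 0 := ⟨fun _ => B, rfl, fun _ hj => absurd hj (Nat.not_lt_zero _)⟩

theorem succ_iff : MemCk A B (k + 1) ↔ ∃ C, IsCommutatorOf A B C ∧ MemCk A C k := by
  constructor
  · rintro ⟨D, rfl, hD⟩
    exact ⟨D 1, hD 0 k.succ_pos, fun j => D (j + 1), rfl, fun j hj => hD (j + 1) (by omega)⟩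
  · rintro ⟨C, hC, D, rfl, hD⟩
    refine ⟨fun j => Nat.casesOn j B D, rfl, fun j hj => ?_⟩
    cases j with
    | zero => exact hC
    | succ j => exact hD j (by omega)

theorem mono (h : MemCk A B k) (hjk : j ≤ k) : MemCk A B j := by
  obtain ⟨D, hD0, hD⟩ := h
  exact ⟨D, hD0, fun i hi => hD i (hi.trans_le hjk)⟩

theorem neg (h : MemCk A B k) : MemCk A (-B) k := by
  induction k generalizing B with
  | zero => exact zero
  | succ k ih =>
    obtain ⟨C, hC, hCk⟩ := succ_iff.1 h
    exact succ_iff.2 ⟨-C, hC.neg, ih hCk⟩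

theorem add (h : MemCk A B k) (h' : MemCk A B' k) : MemCk A (B + B') k := by
  induction k generalizing B B' with
  | zero => exact zero
  | succ k ih =>
    obtain ⟨C, hC, hCk⟩ := succ_iff.1 h
    obtain ⟨C', hC', hC'k⟩ := succ_iff.1 h'
    exact succ_iff.2 ⟨C + C', hC.add hC', ih hCk hC'k⟩

theorem star [CompleteSpace E] (h : MemCk A B k) : MemCk A (star B) k := by
  induction k generalizing B with
  | zero => exact zero
  | succ k ih =>
    obtain ⟨C, hC, hCk⟩ := succ_iff.1 h
    exact succ_iff.2 ⟨-star C, hC.star, (ih hCk).neg⟩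

theorem mul [CompleteSpace E] (hA : IsSelfAdjoint A) (h : MemCk A B k) (h' : MemCk A B' k) :
    MemCk A (B * B') k := by
  induction k generalizing B B' with
  | zero => exact zero
  | succ k ih =>
    obtain ⟨C, hC, hCk⟩ := succ_iff.1 h
    obtain ⟨C', hC', hC'k⟩ := succ_iff.1 h'
    exact succ_iff.2 ⟨B * C' + C * B', hC.mul hA hC',
      (ih (h.mono k.le_succ) hC'k).add (ih hCk (h'.mono k.le_succ))⟩

end MemCk

variable [CompleteSpace E] {A : E →ₗ.[ℂ] E} {k : ℕ}

theorem memCk_star_iff {B : E →L[ℂ] E} : MemCk A (star B) k ↔ MemCk A B k :=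
  ⟨fun h => by simpa using h.star, MemCk.star⟩

theorem memCk_succ_iff_star_mul (hA : IsSelfAdjoint A) {U : E →L[ℂ] E} (hU : U * star U = 1) :
    MemCk A U (k + 1) ↔ ∃ C, IsCommutatorOf A U C ∧ MemCk A (star U * C) k := by
  constructor
  · intro h
    obtain ⟨C, hC, hCk⟩ := MemCk.succ_iff.1 h
    exact ⟨C, hC, (h.mono k.le_succ).star.mul hA hCk⟩
  · rintro ⟨C, hC, hCk⟩
    induction k with
    | zero => exact MemCk.succ_iff.2 ⟨C, hC, MemCk.zero⟩
    | succ k ih =>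
      have hUk : MemCk A U (k + 1) := ih (hCk.mono k.le_succ)
      have hCk' : MemCk A C (k + 1) := by
        simpa only [← mul_assoc, hU, one_mul] using hUk.mul hA hCk
      exact MemCk.succ_iff.2 ⟨C, hC, hCk'⟩

theorem memCk_succ_iff_mul_star (hA : IsSelfAdjoint A) {U : E →L[ℂ] E} (hU : star U * U = 1) :
    MemCk A U (k + 1) ↔ ∃ C, IsCommutatorOf A U C ∧ MemCk A (C * star U) k := by
  constructor
  · intro h
    obtain ⟨C, hC, hCk⟩ := MemCk.succ_iff.1 h
    exact ⟨C, hC, hCk.mul hA (h.mono k.le_succ).star⟩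
  · rintro ⟨C, hC, hCk⟩
    -- `-(C U*)* = U** (ad_A U*)`, so this is the previous lemma for `U*`.
    have hstar : MemCk A (star (star U) * -star C) k := by
      simpa using hCk.star.neg
    rw [← memCk_star_iff, memCk_succ_iff_star_mul hA (by simpa using hU)]
    exact ⟨_, hC.star, hstar⟩

end Commutator

/-- For a unitary `U` and `k ≥ 1`, the following are equivalent: `U ∈ C^k(A)`;
`U* ∈ C^k(A)`; `U ∈ C¹(A)` and `U*AU − A = U*(ad_A U) ∈ C^{k−1}(A)`;
`U ∈ C¹(A)` and `A − UAU* = (ad_A U)U* ∈ C^{k−1}(A)`. -/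
theorem stmt_5 (A : H →ₗ.[ℂ] H) (hA : IsSelfAdjoint A) (k : ℕ) (hk : 1 ≤ k)
    (U : H →L[ℂ] H) (hU : U ∈ unitary (H →L[ℂ] H)) :
    (MemCk A U k ↔ MemCk A (star U) k) ∧
    (MemCk A U k ↔ ∃ C : H →L[ℂ] H, IsCommutatorOf A U C ∧ MemCk A (star U * C) (k - 1)) ∧
    (MemCk A U k ↔ ∃ C : H →L[ℂ] H, IsCommutatorOf A U C ∧ MemCk A (C * star U) (k - 1)) := by
  obtain ⟨m, rfl⟩ : ∃ m, k = m + 1 := ⟨k - 1, by omega⟩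
  rw [Nat.add_sub_cancel]
  exact ⟨memCk_star_iff.symm, memCk_succ_iff_star_mul hA hU.2, memCk_succ_iff_mul_star hA hU.1⟩
end

section
/- Let (B_n)_{n∈ℕ} be a sequence of bounded operators on H, each of class C^1(A). Assume that the sequences (B_n) and (ad_A B_n) converge strongly to bounded operators C_0 and C_1 respectively. Then C_0 belongs to C^1(A) and ad_A(C_0) = C_1. -/
open Filter

variable {H : Type} [NormedAddCommGroup H] [InnerProductSpace ℂ H] [CompleteSpace H]

omit [CompleteSpace H] in
theorem IsCommutatorOf.of_tendsto {ι : Type*} {l : Filter ι} [l.NeBot] {A : H →ₗ.[ℂ] H}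
    {B C : ι → H →L[ℂ] H} {B₀ C₀ : H →L[ℂ] H} (hBC : ∀ᶠ i in l, IsCommutatorOf A (B i) (C i))
    (hB : ∀ x, Tendsto (fun i => B i x) l (nhds (B₀ x)))
    (hC : ∀ x, Tendsto (fun i => C i x) l (nhds (C₀ x))) :
    IsCommutatorOf A B₀ C₀ := by
  intro x y
  have hform : Tendsto (fun i => (inner ℂ (A x) (B i (y : H)) : ℂ) - inner ℂ (x : H) (B i (A y)))
      l (nhds ((inner ℂ (A x) (B₀ (y : H)) : ℂ) - inner ℂ (x : H) (B₀ (A y)))) :=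
    (tendsto_const_nhds.inner (hB y)).sub (tendsto_const_nhds.inner (hB (A y)))
  have hcomm : Tendsto (fun i => (inner ℂ (A x) (B i (y : H)) : ℂ) - inner ℂ (x : H) (B i (A y)))
      l (nhds (inner ℂ (x : H) (C₀ (y : H)))) :=
    (tendsto_const_nhds.inner (hC y)).congr' (hBC.mono fun i hi => (hi x y).symm)
  exact tendsto_nhds_unique hform hcomm

theorem stmt_6_general (A : H →ₗ.[ℂ] H)
    (B C : ℕ → H →L[ℂ] H) (hBC : ∀ n, IsCommutatorOf A (B n) (C n))
    (C₀ C₁ : H →L[ℂ] H)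
    (hB : ∀ x : H, Tendsto (fun n => B n x) atTop (nhds (C₀ x)))
    (hC : ∀ x : H, Tendsto (fun n => C n x) atTop (nhds (C₁ x))) :
    IsCommutatorOf A C₀ C₁ :=
  IsCommutatorOf.of_tendsto (Eventually.of_forall hBC) hB hC

/-- If `(Bₙ) ⊆ C¹(A)` with `ad_A Bₙ = Cₙ`, and `Bₙ → C₀`, `Cₙ → C₁` strongly, then
`C₀ ∈ C¹(A)` with `ad_A C₀ = C₁`. -/
theorem stmt_6 (A : H →ₗ.[ℂ] H) (hA : IsSelfAdjoint A)
    (B C : ℕ → H →L[ℂ] H) (hBC : ∀ n, IsCommutatorOf A (B n) (C n))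
    (C₀ C₁ : H →L[ℂ] H)
    (hB : ∀ x : H, Tendsto (fun n => B n x) atTop (nhds (C₀ x)))
    (hC : ∀ x : H, Tendsto (fun n => C n x) atTop (nhds (C₁ x))) :
    IsCommutatorOf A C₀ C₁ :=
  stmt_6_general A B C hBC C₀ C₁ hB hC
end

section
/- (Gronwall-type lemma) Let J = (a,b) ⊂ ℝ be an open interval and let f, φ, ψ be non-negative real-valued functions on J with f bounded and φ, ψ integrable on J. Assume there exist ω ≥ 0 and θ ∈ [0,1) such that for all λ ∈ J, f(λ) ≤ ω + ∫_λ^b (φ(τ) f(τ)^θ + ψ(τ) f(τ)) dτ. Then for all λ ∈ J, f(λ) ≤ [ ω^{1−θ} + (1−θ) ∫_λ^b φ(μ) e^{(θ−1)∫_μ^b ψ(τ)dτ} dμ ]^{1/(1−θ)} · e^{∫_λ^b ψ(τ)dτ}. -/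
/-!
Fix `ω₀ > ω` and put `u x = ω₀ + ∫_x^b (φ f^θ + ψ f)`, `P x = ∫_x^b ψ`. The hypothesis gives
`f ≤ u`, hence `-u' = φ f^θ + ψ f ≤ φ u^θ + ψ u` a.e., and for `V = u^{1-θ} e^{(θ-1)P}` the chain
rule yields `V' ≥ -(1-θ) φ e^{(θ-1)P}` a.e. Since `u ≥ ω₀ > 0` stays away from the singularity of
`u ↦ u^{1-θ}` at `0`, `V` is absolutely continuous, so integrating `V'` from `λ` to `b`, where
`V b = ω₀^{1-θ}`, bounds `u λ ≥ f λ`. Finally let `ω₀ ↓ ω`.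
-/

open Set MeasureTheory Filter Topology intervalIntegral Real
open scoped NNReal

namespace AbsolutelyContinuousOnInterval

variable {X Y : Type*} [PseudoMetricSpace X] [PseudoMetricSpace Y]

theorem comp_lipschitzOnWith {f : ℝ → X} {h : X → Y} {a b : ℝ} {K : ℝ≥0} {s : Set X}
    (hh : LipschitzOnWith K h s) (hf : AbsolutelyContinuousOnInterval f a b)
    (hfs : MapsTo f (uIcc a b) s) : AbsolutelyContinuousOnInterval (h ∘ f) a b := by
  rw [absolutelyContinuousOnInterval_iff] at hf ⊢
  intro ε hε
  obtain ⟨δ, hδ, hfδ⟩ := hf (ε / (K + 1)) (by positivity)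
  refine ⟨δ, hδ, fun E hE hEδ => ?_⟩
  calc ∑ i ∈ Finset.range E.1, dist (h (f (E.2 i).1)) (h (f (E.2 i).2))
      ≤ ∑ i ∈ Finset.range E.1, K * dist (f (E.2 i).1) (f (E.2 i).2) :=
        Finset.sum_le_sum fun i hi =>
          hh.dist_le_mul _ (hfs (hE.1 i hi).1) _ (hfs (hE.1 i hi).2)
    _ = K * ∑ i ∈ Finset.range E.1, dist (f (E.2 i).1) (f (E.2 i).2) := by
        rw [Finset.mul_sum]
    _ ≤ K * (ε / (K + 1)) := by gcongr; exact (hfδ E hE hEδ).le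
    _ < (K + 1) * (ε / (K + 1)) := by gcongr; linarith
    _ = ε := by field_simp

theorem comp_contDiffOn {f h : ℝ → ℝ} {a b : ℝ} {s : Set ℝ}
    (hh : ContDiffOn ℝ 1 h s) (hf : AbsolutelyContinuousOnInterval f a b)
    (hfs : MapsTo f (uIcc a b) s) : AbsolutelyContinuousOnInterval (h ∘ f) a b := by
  have hcpt : IsCompact (f '' uIcc a b) := isCompact_uIcc.image_of_continuousOn hf.continuousOn
  have hconv : Convex ℝ (f '' uIcc a b) :=
    (isPreconnected_uIcc.image f hf.continuousOn).convex
  obtain ⟨K, hK⟩ := (hh.mono hfs.image_subset).exists_lipschitzOnWith one_ne_zero hconv hcpt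
  exact comp_lipschitzOnWith hK hf (mapsTo_image f _)

theorem integral_le_sub_of_ae_le_deriv {f k : ℝ → ℝ} {a b : ℝ} (hab : a ≤ b)
    (hf : AbsolutelyContinuousOnInterval f a b) (hk : IntervalIntegrable k volume a b)
    (hkf : k ≤ᵐ[volume.restrict (Ioo a b)] deriv f) :
    ∫ x in a..b, k x ≤ f b - f a := by
  rw [← hf.integral_deriv_eq_sub]
  refine integral_mono_ae_restrict hab hk hf.intervalIntegrable_deriv ?_
  rwa [← Measure.restrict_congr_set Ioo_ae_eq_Icc]

end AbsolutelyContinuousOnInterval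

theorem neg_mul_le_deriv_rpow_mul {u E : ℝ → ℝ} {x g φ ψ θ : ℝ}
    (hu : HasDerivAt u (-g) x) (hE : HasDerivAt E (E x * ((1 - θ) * ψ)) x)
    (hux : 0 < u x) (hEx : 0 ≤ E x) (hθ : θ ≤ 1) (hg : g ≤ φ * u x ^ θ + ψ * u x) :
    -((1 - θ) * (φ * E x)) ≤ deriv (fun y => u y ^ (1 - θ) * E y) x := by
  rw [((hu.rpow_const (Or.inl hux.ne')).fun_mul hE).deriv]
  have hθ_rpow : u x ^ (1 - θ - 1) * u x ^ θ = 1 := by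
    rw [← rpow_add hux]; norm_num
  have hone_rpow : u x ^ (1 - θ - 1) * u x = u x ^ (1 - θ) := by
    rw [← rpow_add_one hux.ne']; ring_nf
  have hgap : 0 ≤ (1 - θ) * E x * u x ^ (1 - θ - 1) * (φ * u x ^ θ + ψ * u x - g) := by
    have := rpow_nonneg hux.le (1 - θ - 1)
    have : 0 ≤ 1 - θ := by linarith
    have : 0 ≤ φ * u x ^ θ + ψ * u x - g := by linarith
    positivity
  linear_combination hgap + (1 - θ) * φ * E x * hθ_rpow + (1 - θ) * ψ * E x * hone_rpow

theorem rpow_mul_exp_le_of_le_mul_rpow_add_mul {l b ω₀ θ : ℝ} {φ ψ g : ℝ → ℝ}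
    (hlb : l ≤ b) (hω₀ : 0 < ω₀) (hθ : θ < 1)
    (hφ : IntervalIntegrable φ volume l b) (hψ : IntervalIntegrable ψ volume l b)
    (hg : IntervalIntegrable g volume l b) (hg0 : ∀ x ∈ Ioo l b, 0 ≤ g x)
    (hgle : ∀ x ∈ Ioo l b,
      g x ≤ φ x * (ω₀ + ∫ t in x..b, g t) ^ θ + ψ x * (ω₀ + ∫ t in x..b, g t)) :
    (ω₀ + ∫ t in l..b, g t) ^ (1 - θ) * exp ((θ - 1) * ∫ t in l..b, ψ t) ≤
      ω₀ ^ (1 - θ) + (1 - θ) * ∫ x in l..b, φ x * exp ((θ - 1) * ∫ t in x..b, ψ t) := by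
  set u : ℝ → ℝ := fun x => ω₀ + ∫ t in x..b, g t with hu_def
  set E : ℝ → ℝ := fun x => exp ((θ - 1) * ∫ t in x..b, ψ t) with hE_def
  have hu_eq : u = fun x => ω₀ - ∫ t in b..x, g t := by
    funext x; simp only [hu_def, integral_symm x b]; ring
  have hE_eq : E = exp ∘ fun x => (1 - θ) * ∫ t in b..x, ψ t := by
    funext x; simp only [hE_def, Function.comp, integral_symm x b]; ring_nf
  have hu_pos : ∀ x ∈ uIcc l b, 0 < u x := by
    intro x hx
    rw [uIcc_of_le hlb] at hx
    have : 0 ≤ ∫ t in x..b, g t := by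
      rw [integral_of_le hx.2, integral_Ioc_eq_integral_Ioo]
      exact setIntegral_nonneg measurableSet_Ioo fun t ht => hg0 t ⟨hx.1.trans_lt ht.1, ht.2⟩
    exact add_pos_of_pos_of_nonneg hω₀ this
  have hu_ac : AbsolutelyContinuousOnInterval u l b := by
    rw [hu_eq]
    exact (LipschitzWith.const ω₀).lipschitzOnWith.absolutelyContinuousOnInterval.sub
      (hg.absolutelyContinuousOnInterval_intervalIntegral right_mem_uIcc)
  have hE_ac : AbsolutelyContinuousOnInterval E l b := by
    rw [hE_eq]
    exact AbsolutelyContinuousOnInterval.comp_contDiffOn contDiff_exp.contDiffOn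
      ((hψ.absolutelyContinuousOnInterval_intervalIntegral right_mem_uIcc).const_mul _)
      (mapsTo_univ _ _)
  have hV_ac : AbsolutelyContinuousOnInterval (fun x => u x ^ (1 - θ) * E x) l b :=
    (AbsolutelyContinuousOnInterval.comp_contDiffOn
      (contDiffOn_fun_id.rpow_const_of_ne fun x hx => (ne_of_gt hx)) hu_ac hu_pos).mul hE_ac
  have hV_deriv : (fun x => -((1 - θ) * (φ x * E x))) ≤ᵐ[volume.restrict (Ioo l b)]
      deriv (fun x => u x ^ (1 - θ) * E x) := by
    refine (ae_restrict_iff' measurableSet_Ioo).mpr ?_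
    filter_upwards [hg.ae_hasDerivAt_integral, hψ.ae_hasDerivAt_integral] with x hgx hψx hx
    have hxI : x ∈ uIcc l b := by rw [uIcc_of_le hlb]; exact Ioo_subset_Icc_self hx
    have hu' : HasDerivAt u (-g x) x := by
      rw [hu_eq]; exact (hgx hxI b right_mem_uIcc).const_sub ω₀
    have hE' : HasDerivAt E (E x * ((1 - θ) * ψ x)) x := by
      rw [hE_eq]; exact ((hψx hxI b right_mem_uIcc).const_mul (1 - θ)).exp
    exact neg_mul_le_deriv_rpow_mul hu' hE' (hu_pos x hxI) (exp_pos _).le hθ.le (hgle x hx)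
  have hk : IntervalIntegrable (fun x => -((1 - θ) * (φ x * E x))) volume l b :=
    ((hφ.mul_continuousOn hE_ac.continuousOn).const_mul _).neg
  have hFTC := hV_ac.integral_le_sub_of_ae_le_deriv hlb hk hV_deriv
  simp only [hu_def, hE_def, integral_same, mul_zero, exp_zero, add_zero, mul_one,
    intervalIntegral.integral_neg, intervalIntegral.integral_const_mul] at hFTC
  linarith

theorem le_rpow_one_div_mul_exp_of_rpow_mul_exp_le {x B P θ : ℝ} (hx : 0 ≤ x) (hθ : θ < 1)
    (h : x ^ (1 - θ) * exp ((θ - 1) * P) ≤ B) : x ≤ B ^ (1 / (1 - θ)) * exp P := by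
  have hθ' : 0 < 1 - θ := by linarith
  have hB : 0 ≤ B := le_trans (by positivity) h
  have hxB : x ^ (1 - θ) ≤ B * exp ((1 - θ) * P) := by
    calc x ^ (1 - θ) = x ^ (1 - θ) * exp ((θ - 1) * P) * exp ((1 - θ) * P) := by
          rw [mul_assoc, ← exp_add]; ring_nf; rw [exp_zero, mul_one]
      _ ≤ B * exp ((1 - θ) * P) := by gcongr
  calc x = (x ^ (1 - θ)) ^ (1 / (1 - θ)) := by rw [one_div, rpow_rpow_inv hx hθ'.ne']
    _ ≤ (B * exp ((1 - θ) * P)) ^ (1 / (1 - θ)) := by gcongr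
    _ = B ^ (1 / (1 - θ)) * exp P := by
        rw [mul_rpow hB (exp_pos _).le, ← exp_mul]; field_simp

theorem integrableOn_mul_rpow_add_mul {α : Type*} [MeasurableSpace α] {μ : Measure α}
    {s : Set α} {f φ ψ : α → ℝ} {M θ : ℝ} (hs : MeasurableSet s)
    (hφ : IntegrableOn φ s μ) (hψ : IntegrableOn ψ s μ) (hf : Measurable f)
    (hf0 : ∀ x ∈ s, 0 ≤ f x) (hfM : ∀ x ∈ s, f x ≤ M) (hθ : 0 ≤ θ) :
    IntegrableOn (fun x => φ x * f x ^ θ + ψ x * f x) s μ := by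
  refine Integrable.add (hφ.mul_bdd (c := M ^ θ) (hf.pow_const θ).aestronglyMeasurable ?_)
    (hψ.mul_bdd (c := M) hf.aestronglyMeasurable ?_) <;>
    refine (ae_restrict_iff' hs).mpr (ae_of_all _ fun x hx => ?_)
  · rw [norm_of_nonneg (rpow_nonneg (hf0 x hx) θ)]
    exact rpow_le_rpow (hf0 x hx) (hfM x hx) hθ
  · rw [norm_of_nonneg (hf0 x hx)]
    exact hfM x hx

theorem integral_Ioo_eq_intervalIntegral {F : ℝ → ℝ} {x b : ℝ} (hxb : x ≤ b) :
    ∫ t in Ioo x b, F t = ∫ t in x..b, F t := by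
  rw [integral_of_le hxb, integral_Ioc_eq_integral_Ioo]

theorem le_of_le_add_integral_mul_rpow_add_mul {l b ω₀ θ : ℝ} {f φ ψ : ℝ → ℝ}
    (hlb : l < b) (hω₀ : 0 < ω₀) (hθ0 : 0 ≤ θ) (hθ1 : θ < 1)
    (hf0 : ∀ x ∈ Ico l b, 0 ≤ f x) (hφ0 : ∀ x ∈ Ioo l b, 0 ≤ φ x)
    (hψ0 : ∀ x ∈ Ioo l b, 0 ≤ ψ x)
    (hφ : IntegrableOn φ (Ioo l b)) (hψ : IntegrableOn ψ (Ioo l b))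
    (hg : IntegrableOn (fun τ => φ τ * f τ ^ θ + ψ τ * f τ) (Ioo l b))
    (hineq : ∀ x ∈ Ico l b, f x ≤ ω₀ + ∫ τ in Ioo x b, (φ τ * f τ ^ θ + ψ τ * f τ)) :
    f l ≤ (ω₀ ^ (1 - θ) +
        (1 - θ) * ∫ μ in Ioo l b, φ μ * exp ((θ - 1) * ∫ τ in Ioo μ b, ψ τ)) ^ (1 / (1 - θ)) *
      exp (∫ τ in Ioo l b, ψ τ) := by
  set g : ℝ → ℝ := fun τ => φ τ * f τ ^ θ + ψ τ * f τ
  have hint : ∀ {F : ℝ → ℝ}, IntegrableOn F (Ioo l b) → IntervalIntegrable F volume l b :=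
    (intervalIntegrable_iff_integrableOn_Ioo_of_le hlb.le).mpr
  have hf_le : ∀ x ∈ Ico l b, f x ≤ ω₀ + ∫ t in x..b, g t := fun x hx => by
    rw [← integral_Ioo_eq_intervalIntegral hx.2.le]; exact hineq x hx
  have hg0 : ∀ x ∈ Ioo l b, 0 ≤ g x := fun x hx => by
    have := hf0 x (Ioo_subset_Ico_self hx)
    have := hφ0 x hx
    have := hψ0 x hx
    positivity
  have hgle : ∀ x ∈ Ioo l b,
      g x ≤ φ x * (ω₀ + ∫ t in x..b, g t) ^ θ + ψ x * (ω₀ + ∫ t in x..b, g t) := by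
    intro x hx
    have := hf_le x (Ioo_subset_Ico_self hx)
    have := hf0 x (Ioo_subset_Ico_self hx)
    have := hφ0 x hx
    have := hψ0 x hx
    show φ x * f x ^ θ + ψ x * f x ≤ _
    gcongr
  have hV := rpow_mul_exp_le_of_le_mul_rpow_add_mul hlb.le hω₀ hθ1 (hint hφ) (hint hψ)
    (hint hg) hg0 hgle
  have hweight : ∫ μ in Ioo l b, φ μ * exp ((θ - 1) * ∫ τ in Ioo μ b, ψ τ) =
      ∫ μ in l..b, φ μ * exp ((θ - 1) * ∫ τ in μ..b, ψ τ) := by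
    rw [integral_Ioo_eq_intervalIntegral hlb.le]
    refine integral_congr fun μ hμ => ?_
    rw [uIcc_of_le hlb.le] at hμ
    rw [integral_Ioo_eq_intervalIntegral hμ.2]
  have hl : l ∈ Ico l b := left_mem_Ico.mpr hlb
  rw [hweight, integral_Ioo_eq_intervalIntegral hlb.le]
  exact (hf_le l hl).trans
    (le_rpow_one_div_mul_exp_of_rpow_mul_exp_le ((hf0 l hl).trans (hf_le l hl)) hθ1 hV)

theorem stmt_14_general (a b : ℝ) (f φ ψ : ℝ → ℝ)
    (hf0 : ∀ x ∈ Ioo a b, 0 ≤ f x) (hφ0 : ∀ x ∈ Ioo a b, 0 ≤ φ x)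
    (hψ0 : ∀ x ∈ Ioo a b, 0 ≤ ψ x)
    (hfmeas : Measurable f) (hfbdd : ∃ M : ℝ, ∀ x ∈ Ioo a b, f x ≤ M)
    (hφint : IntegrableOn φ (Ioo a b)) (hψint : IntegrableOn ψ (Ioo a b))
    (ω θ : ℝ) (hω : 0 ≤ ω) (hθ0 : 0 ≤ θ) (hθ1 : θ < 1)
    (hineq : ∀ l ∈ Ioo a b,
      f l ≤ ω + ∫ τ in Ioo l b, (φ τ * f τ ^ θ + ψ τ * f τ)) :
    ∀ l ∈ Ioo a b,
      f l ≤ (ω ^ (1 - θ) +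
          (1 - θ) * ∫ μ in Ioo l b, φ μ * Real.exp ((θ - 1) * ∫ τ in Ioo μ b, ψ τ)) ^
            (1 / (1 - θ)) *
        Real.exp (∫ τ in Ioo l b, ψ τ) := by
  intro l hl
  obtain ⟨M, hM⟩ := hfbdd
  have hIco : Ico l b ⊆ Ioo a b := fun x hx => ⟨hl.1.trans_le hx.1, hx.2⟩
  have hIoo : Ioo l b ⊆ Ioo a b := Ioo_subset_Ico_self.trans hIco
  have hg := integrableOn_mul_rpow_add_mul measurableSet_Ioo hφint hψint hfmeas hf0 hM hθ0
  have hbound : ∀ ω₀ > ω, f l ≤ (ω₀ ^ (1 - θ) +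
      (1 - θ) * ∫ μ in Ioo l b, φ μ * exp ((θ - 1) * ∫ τ in Ioo μ b, ψ τ)) ^ (1 / (1 - θ)) *
        exp (∫ τ in Ioo l b, ψ τ) := fun ω₀ hω₀ =>
    le_of_le_add_integral_mul_rpow_add_mul hl.2 (hω.trans_lt hω₀) hθ0 hθ1
      (fun x hx => hf0 x (hIco hx)) (fun x hx => hφ0 x (hIoo hx)) (fun x hx => hψ0 x (hIoo hx))
      (hφint.mono_set hIoo) (hψint.mono_set hIoo) (hg.mono_set hIoo)
      fun x hx => (hineq x (hIco hx)).trans (by gcongr)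
  have hcont : ContinuousAt (fun ω₀ : ℝ => (ω₀ ^ (1 - θ) +
      (1 - θ) * ∫ μ in Ioo l b, φ μ * exp ((θ - 1) * ∫ τ in Ioo μ b, ψ τ)) ^ (1 / (1 - θ)) *
        exp (∫ τ in Ioo l b, ψ τ)) ω := by
    have : 0 < 1 - θ := by linarith
    fun_prop (disch := positivity)
  exact ge_of_tendsto (hcont.tendsto.mono_left nhdsWithin_le_nhds)
    (eventually_nhdsWithin_of_forall (s := Ioi ω) hbound)

/-- Gronwall-type lemma: if `f, φ, ψ ≥ 0` on `J = (a,b)`, `f` bounded (and measurable),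
`φ, ψ ∈ L¹(J)`, `ω ≥ 0`, `θ ∈ [0,1)` and
`f(λ) ≤ ω + ∫_λ^b (φ(τ) f(τ)^θ + ψ(τ) f(τ)) dτ` for all `λ ∈ J`, then for all `λ ∈ J`,
`f(λ) ≤ [ω^{1−θ} + (1−θ)∫_λ^b φ(μ) e^{(θ−1)∫_μ^b ψ} dμ]^{1/(1−θ)} · e^{∫_λ^b ψ}`. -/
theorem stmt_14 (a b : ℝ) (hab : a < b) (f φ ψ : ℝ → ℝ)
    (hf0 : ∀ x ∈ Ioo a b, 0 ≤ f x) (hφ0 : ∀ x ∈ Ioo a b, 0 ≤ φ x)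
    (hψ0 : ∀ x ∈ Ioo a b, 0 ≤ ψ x)
    (hfmeas : Measurable f) (hfbdd : ∃ M : ℝ, ∀ x ∈ Ioo a b, f x ≤ M)
    (hφint : IntegrableOn φ (Ioo a b)) (hψint : IntegrableOn ψ (Ioo a b))
    (ω θ : ℝ) (hω : 0 ≤ ω) (hθ0 : 0 ≤ θ) (hθ1 : θ < 1)
    (hineq : ∀ l ∈ Ioo a b,
      f l ≤ ω + ∫ τ in Ioo l b, (φ τ * f τ ^ θ + ψ τ * f τ)) :
    ∀ l ∈ Ioo a b,
      f l ≤ (ω ^ (1 - θ) +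
          (1 - θ) * ∫ μ in Ioo l b, φ μ * Real.exp ((θ - 1) * ∫ τ in Ioo μ b, ψ τ)) ^
            (1 / (1 - θ)) *
        Real.exp (∫ τ in Ioo l b, ψ τ) :=
  stmt_14_general a b f φ ψ hf0 hφ0 hψ0 hfmeas hfbdd hφint hψint ω θ hω hθ0 hθ1 hineq
end

section
/- (Abstract compactness propagation) Let H be a complex Hilbert space, T > 0, and let U, U_0 : [0,T] → B(H) be strongly continuous families of unitary operators such that there exists C > 0 with ‖U(t)*U_0(t) − U(s)*U_0(s)‖ ≤ C|t − s| for all s, t ∈ [0,T]. Let t ↦ W_t be a strongly continuous family of bounded operators on H such that for all (s,t) ∈ [0,T]^2 the strongly convergent integral ∫_s^t U_0(τ)* W_τ U_0(τ) dτ is a compact operator. Then the strongly convergent integral ∫_0^T U(τ)* W_τ U(τ) dτ is also a compact operator. -/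
open Set

variable {H : Type} [NormedAddCommGroup H] [InnerProductSpace ℂ H] [CompleteSpace H]

/-!
With `A t = U(t)* U₀(t)` and `G t = U₀(t)* W_t U₀(t)` one has `U(t)* W_t U(t) = A t · G t · (A t)*`,
where `A` is a norm-continuous unitary family and `G` is strongly continuous, hence uniformly
bounded by Banach–Steinhaus. Freezing `A` at the left endpoint of each piece of a fine partition
of `[0, T]` changes the integral by at most `2 ε sup ‖G‖ T` in norm, `ε` being the oscillation of
`A` on the pieces, and turns it into a finite sum of operators `A(pᵢ) (∫ G) A(pᵢ)*`, which are
compact by hypothesis. Compact operators form a closed set, so the integral is compact.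
-/

open Filter Topology MeasureTheory

section CStarRing

variable {R : Type*} [NormedRing R] [StarRing R] [CStarRing R]

theorem norm_mul_mul_star_sub_le {a b : R} (ha : a ∈ unitary R) (hb : b ∈ unitary R) (g : R) :
    ‖a * g * star a - b * g * star b‖ ≤ 2 * ‖a - b‖ * ‖g‖ := by
  have hsplit : a * g * star a - b * g * star b = (a - b) * g * star a + b * (g * star (a - b)) := by
    simp only [star_sub, sub_mul, mul_sub, mul_assoc]; abel
  calc ‖a * g * star a - b * g * star b‖
      ≤ ‖(a - b) * g‖ + ‖g * star (a - b)‖ := by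
        rw [hsplit, ← CStarRing.norm_mul_mem_unitary ((a - b) * g) (Unitary.star_mem ha),
          ← CStarRing.norm_mem_unitary_mul (g * star (a - b)) hb]
        exact norm_add_le _ _
    _ ≤ ‖a - b‖ * ‖g‖ + ‖g‖ * ‖a - b‖ := by
        gcongr
        · exact norm_mul_le _ _
        · exact (norm_mul_le _ _).trans_eq (by rw [norm_star])
    _ = 2 * ‖a - b‖ * ‖g‖ := by ring

end CStarRing

section StronglyContinuous

variable {X : Type*} [TopologicalSpace X] {s : Set X} {𝕜 : Type*} [NontriviallyNormedField 𝕜]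
  {E F : Type*} [NormedAddCommGroup E] [NormedSpace 𝕜 E] [NormedAddCommGroup F] [NormedSpace 𝕜 F]

theorem IsCompact.exists_bound_of_continuousOn_clm_apply [CompleteSpace E] (hs : IsCompact s)
    {V : X → E →L[𝕜] F} (hV : ∀ x, ContinuousOn (fun t => V t x) s) :
    ∃ M, ∀ t ∈ s, ‖V t‖ ≤ M := by
  obtain ⟨M, hM⟩ := banach_steinhaus (g := fun t : s => V t) fun x =>
    (hs.exists_bound_of_continuousOn (hV x)).imp fun _ hC t => hC t t.2
  exact ⟨M, fun t ht => hM ⟨t, ht⟩⟩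

theorem ContinuousOn.clm_apply_of_forall_norm_le {V : X → E →L[𝕜] F} {K : ℝ}
    (hV : ∀ x, ContinuousOn (fun t => V t x) s) (hK : ∀ t ∈ s, ‖V t‖ ≤ K)
    {z : X → E} (hz : ContinuousOn z s) : ContinuousOn (fun t => V t (z t)) s := by
  intro a ha
  rw [ContinuousWithinAt, tendsto_iff_norm_sub_tendsto_zero]
  have hlim : Tendsto (fun t => K * ‖z t - z a‖ + ‖V t (z a) - V a (z a)‖) (𝓝[s] a) (𝓝 0) := by
    simpa using ((tendsto_iff_norm_sub_tendsto_zero.1 (hz a ha)).const_mul K).add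
      (tendsto_iff_norm_sub_tendsto_zero.1 (hV (z a) a ha))
  refine squeeze_zero' (Eventually.of_forall fun _ => norm_nonneg _) ?_ hlim
  filter_upwards [self_mem_nhdsWithin] with t ht
  calc ‖V t (z t) - V a (z a)‖ ≤ ‖V t (z t - z a)‖ + ‖V t (z a) - V a (z a)‖ := by
        rw [map_sub]; exact norm_sub_le_norm_sub_add_norm_sub _ _ _
    _ ≤ K * ‖z t - z a‖ + ‖V t (z a) - V a (z a)‖ := by
        gcongr
        exact (V t).le_of_opNorm_le (hK t ht) _

theorem IsCompact.continuousOn_clm_apply [CompleteSpace E] (hs : IsCompact s)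
    {V : X → E →L[𝕜] F} (hV : ∀ x, ContinuousOn (fun t => V t x) s)
    {z : X → E} (hz : ContinuousOn z s) : ContinuousOn (fun t => V t (z t)) s :=
  let ⟨_, hK⟩ := hs.exists_bound_of_continuousOn_clm_apply hV
  ContinuousOn.clm_apply_of_forall_norm_le hV hK hz

end StronglyContinuous

theorem continuousOn_star_apply_of_mem_unitary {X : Type*} [TopologicalSpace X] {s : Set X}
    {𝕜 E : Type*} [RCLike 𝕜] [NormedAddCommGroup E] [InnerProductSpace 𝕜 E] [CompleteSpace E]
    {V : X → E →L[𝕜] E} (hVu : ∀ t ∈ s, V t ∈ unitary (E →L[𝕜] E))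
    (hV : ∀ x, ContinuousOn (fun t => V t x) s) (y : E) :
    ContinuousOn (fun t => star (V t) y) s := by
  intro a ha
  set z := star (V a) y
  -- `star (V t) y - z = star (V t) (V a z - V t z)`, and `star (V t)` is an isometry.
  have hdist : ∀ t ∈ s, ‖star (V t) y - z‖ = ‖V a z - V t z‖ := by
    intro t ht
    have hVa : V a z = y := by
      change (V a * star (V a)) y = y
      rw [Unitary.mul_star_self_of_mem (hVu a ha)]; rfl
    have hVt : star (V t) (V t z) = z := by
      change (star (V t) * V t) z = z
      rw [Unitary.star_mul_self_of_mem (hVu t ht)]; rfl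
    calc ‖star (V t) y - z‖ = ‖star (V t) (V a z - V t z)‖ := by rw [map_sub, hVa, hVt]
      _ = ‖V a z - V t z‖ :=
        ContinuousLinearMap.norm_map_of_mem_unitary (Unitary.star_mem (hVu t ht)) _
  rw [ContinuousWithinAt, tendsto_iff_norm_sub_tendsto_zero]
  refine (tendsto_iff_norm_sub_tendsto_zero.1 (hV z a ha)).congr' ?_
  filter_upwards [self_mem_nhdsWithin] with t ht
  rw [hdist t ht, norm_sub_rev]

theorem exists_clm_apply_eq_intervalIntegral {𝕜 E F : Type*} [NontriviallyNormedField 𝕜]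
    [NormedAddCommGroup E] [NormedSpace 𝕜 E] [NormedAddCommGroup F] [NormedSpace 𝕜 F]
    [NormedSpace ℝ F] [SMulCommClass ℝ 𝕜 F] {g : ℝ → E →L[𝕜] F} {a b C : ℝ}
    (hg : ∀ x, IntervalIntegrable (fun τ => g τ x) volume a b) (hC : ∀ τ ∈ uIoc a b, ‖g τ‖ ≤ C) :
    ∃ X : E →L[𝕜] F, ∀ x, X x = ∫ τ in a..b, g τ x := by
  let X : E →ₗ[𝕜] F :=
    { toFun := fun x => ∫ τ in a..b, g τ x
      map_add' := fun x y => by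
        simp only [map_add]; exact intervalIntegral.integral_add (hg x) (hg y)
      map_smul' := fun c x => by
        simp only [map_smul]; exact intervalIntegral.integral_smul c _ }
  refine ⟨X.mkContinuous (C * |b - a|) fun x => ?_, fun x => rfl⟩
  calc ‖∫ τ in a..b, g τ x‖ ≤ C * ‖x‖ * |b - a| :=
        intervalIntegral.norm_integral_le_of_norm_le_const fun τ hτ =>
          (g τ).le_of_opNorm_le (hC τ hτ) x
    _ = C * |b - a| * ‖x‖ := by ring

theorem IsCompactOperator.of_forall_exists_norm_sub_le {𝕜 E F : Type*} [NontriviallyNormedField 𝕜]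
    [NormedAddCommGroup E] [NormedSpace 𝕜 E] [NormedAddCommGroup F] [NormedSpace 𝕜 F]
    [CompleteSpace F] {Y : E →L[𝕜] F} (C : ℝ)
    (h : ∀ ε > 0, ∃ Z : E →L[𝕜] F, IsCompactOperator Z ∧ ‖Y - Z‖ ≤ C * ε) :
    IsCompactOperator Y := by
  refine isClosed_setOfPred_isCompactOperator.closure_subset
    (Metric.mem_closure_iff.2 fun ε hε => ?_)
  obtain ⟨Z, hZ, hYZ⟩ := h (ε / (|C| + 1)) (by positivity)
  refine ⟨Z, hZ, ?_⟩
  calc dist Y Z ≤ C * (ε / (|C| + 1)) := by rwa [dist_eq_norm]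
    _ ≤ |C| * (ε / (|C| + 1)) := by gcongr; exact le_abs_self C
    _ < ε := by
        rw [← mul_div_assoc, div_lt_iff₀ (by positivity)]
        nlinarith

theorem exists_partition_sub_le {a b δ : ℝ} (hab : a ≤ b) (hδ : 0 < δ) :
    ∃ (m : ℕ) (p : ℕ → ℝ), p 0 = a ∧ p m = b ∧ Monotone p ∧ ∀ i, p (i + 1) - p i ≤ δ := by
  obtain ⟨m, hm⟩ := exists_nat_gt ((b - a) / δ)
  have hm0 : (0 : ℝ) < m := (div_nonneg (sub_nonneg.2 hab) hδ.le).trans_lt hm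
  have hstep : 0 ≤ (b - a) / m := div_nonneg (sub_nonneg.2 hab) hm0.le
  refine ⟨m, fun i => a + i * ((b - a) / m), by simp, by field_simp; ring,
    fun i j hij => by simp only; gcongr, fun i => ?_⟩
  have : (b - a) / m ≤ δ := by
    rw [div_le_iff₀ hm0]; rw [div_lt_iff₀ hδ] at hm; linarith
  push_cast; linarith

section UnitaryConjugation

variable {E : Type*} [NormedAddCommGroup E] [InnerProductSpace ℂ E] [CompleteSpace E]

theorem norm_intervalIntegral_unitary_conj_sub_le {A G : ℝ → E →L[ℂ] E} {s t ε M : ℝ}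
    (hst : s ≤ t) (hAu : ∀ τ ∈ Icc s t, A τ ∈ unitary (E →L[ℂ] E))
    (hAs : ∀ τ ∈ Icc s t, ‖A τ - A s‖ ≤ ε) (hGM : ∀ τ ∈ Icc s t, ‖G τ‖ ≤ M) {x : E}
    (hF : IntervalIntegrable (fun τ => A τ (G τ (star (A τ) x))) volume s t)
    (hG : IntervalIntegrable (fun τ => G τ (star (A s) x)) volume s t) :
    ‖(∫ τ in s..t, A τ (G τ (star (A τ) x))) - A s (∫ τ in s..t, G τ (star (A s) x))‖
      ≤ 2 * ε * M * (t - s) * ‖x‖ := by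
  have hs : s ∈ Icc s t := left_mem_Icc.2 hst
  have hAsG : IntervalIntegrable (fun τ => A s (G τ (star (A s) x))) volume s t :=
    ⟨(A s).integrable_comp hG.1, (A s).integrable_comp hG.2⟩
  rw [← (A s).intervalIntegral_comp_comm hG, ← intervalIntegral.integral_sub hF hAsG]
  have hbound : ∀ τ ∈ uIoc s t,
      ‖A τ (G τ (star (A τ) x)) - A s (G τ (star (A s) x))‖ ≤ 2 * ε * M * ‖x‖ := by
    intro τ hτ
    rw [uIoc_of_le hst] at hτ
    have hτ' := Ioc_subset_Icc_self hτ
    have hε : 0 ≤ ε := (norm_nonneg _).trans (hAs τ hτ')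
    calc ‖A τ (G τ (star (A τ) x)) - A s (G τ (star (A s) x))‖
        = ‖(A τ * G τ * star (A τ) - A s * G τ * star (A s)) x‖ := rfl
      _ ≤ 2 * ‖A τ - A s‖ * ‖G τ‖ * ‖x‖ :=
        ContinuousLinearMap.le_of_opNorm_le _
          (norm_mul_mul_star_sub_le (hAu τ hτ') (hAu s hs) _) x
      _ ≤ 2 * ε * M * ‖x‖ := by gcongr; exacts [hAs τ hτ', hGM τ hτ']
  calc _ ≤ 2 * ε * M * ‖x‖ * |t - s| := intervalIntegral.norm_integral_le_of_norm_le_const hbound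
    _ = 2 * ε * M * (t - s) * ‖x‖ := by rw [abs_of_nonneg (sub_nonneg.2 hst)]; ring

theorem exists_isCompactOperator_norm_sub_le_of_partition {a b ε M : ℝ} {m : ℕ} {p : ℕ → ℝ}
    (hp0 : p 0 = a) (hpm : p m = b) (hpmono : Monotone p) (hε : 0 ≤ ε)
    {A G : ℝ → E →L[ℂ] E} (hAu : ∀ t ∈ Icc a b, A t ∈ unitary (E →L[ℂ] E))
    (hAc : ContinuousOn A (Icc a b)) (hGc : ∀ x, ContinuousOn (fun t => G t x) (Icc a b))
    (hM : ∀ t ∈ Icc a b, ‖G t‖ ≤ M)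
    (hAε : ∀ i < m, ∀ τ ∈ Icc (p i) (p (i + 1)), ‖A τ - A (p i)‖ ≤ ε)
    (hG : ∀ s ∈ Icc a b, ∀ t ∈ Icc a b, ∀ X : E →L[ℂ] E,
      (∀ x, X x = ∫ τ in s..t, G τ x) → IsCompactOperator X)
    (Y : E →L[ℂ] E) (hY : ∀ x, Y x = ∫ τ in a..b, A τ (G τ (star (A τ) x))) :
    ∃ Z : E →L[ℂ] E, IsCompactOperator Z ∧ ‖Y - Z‖ ≤ 2 * M * (b - a) * ε := by
  subst hp0 hpm
  have hab : p 0 ≤ p m := hpmono m.zero_le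
  have hM0 : 0 ≤ M := (norm_nonneg _).trans (hM _ (left_mem_Icc.2 hab))
  have hpab : ∀ i ≤ m, p i ∈ Icc (p 0) (p m) := fun i hi => ⟨hpmono i.zero_le, hpmono hi⟩
  have hsub : ∀ i < m, Icc (p i) (p (i + 1)) ⊆ Icc (p 0) (p m) := fun i hi =>
    Icc_subset_Icc (hpmono i.zero_le) (hpmono hi)
  have hint : ∀ i < m, ∀ {f : ℝ → E}, ContinuousOn f (Icc (p 0) (p m)) →
      IntervalIntegrable f volume (p i) (p (i + 1)) := fun i hi f hf =>
    (hf.mono ((uIcc_of_le (hpmono i.le_succ)).trans_subset (hsub i hi))).intervalIntegrable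
  have hFc : ∀ x, ContinuousOn (fun τ => A τ (G τ (star (A τ) x))) (Icc (p 0) (p m)) := fun x =>
    hAc.clm_apply (ContinuousOn.clm_apply_of_forall_norm_le hGc hM
      ((continuous_star.comp_continuousOn hAc).clm_apply continuousOn_const))
  choose! X hX using fun i (hi : i < m) => exists_clm_apply_eq_intervalIntegral
    (fun x => hint i hi (hGc x)) fun τ hτ =>
      hM τ (hsub i hi (Ioc_subset_Icc_self ((uIoc_of_le (hpmono i.le_succ)) ▸ hτ)))
  refine ⟨∑ i ∈ Finset.range m, A (p i) * X i * star (A (p i)), ?_, ?_⟩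
  · refine Submodule.sum_mem (compactOperator (RingHom.id ℂ) E E) fun i hi => ?_
    have hi := Finset.mem_range.1 hi
    exact ((hG _ (hpab i hi.le) _ (hpab (i + 1) hi) _ (hX i hi)).comp_clm _).clm_comp _
  refine ContinuousLinearMap.opNorm_le_bound _ (by positivity) fun x => ?_
  have hYx : Y x = ∑ i ∈ Finset.range m, ∫ τ in p i..p (i + 1), A τ (G τ (star (A τ) x)) := by
    rw [hY, intervalIntegral.sum_integral_adjacent_intervals fun i hi => hint i hi (hFc x)]
  calc ‖(Y - ∑ i ∈ Finset.range m, A (p i) * X i * star (A (p i))) x‖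
      = ‖∑ i ∈ Finset.range m, ((∫ τ in p i..p (i + 1), A τ (G τ (star (A τ) x)))
          - A (p i) (∫ τ in p i..p (i + 1), G τ (star (A (p i)) x)))‖ := by
        rw [sub_apply, hYx, sum_apply, ← Finset.sum_sub_distrib]
        refine congrArg norm (Finset.sum_congr rfl fun i hi => ?_)
        rw [← hX i (Finset.mem_range.1 hi)]
        rfl
    _ ≤ ∑ i ∈ Finset.range m, 2 * ε * M * (p (i + 1) - p i) * ‖x‖ := by
        refine norm_sum_le_of_le _ fun i hi => ?_
        have hi := Finset.mem_range.1 hi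
        exact norm_intervalIntegral_unitary_conj_sub_le (hpmono i.le_succ)
          (fun τ hτ => hAu τ (hsub i hi hτ)) (hAε i hi) (fun τ hτ => hM τ (hsub i hi hτ))
          (hint i hi (hFc x)) (hint i hi (hGc _))
    _ = 2 * M * (p m - p 0) * ε * ‖x‖ := by
        rw [← Finset.sum_mul, ← Finset.mul_sum, Finset.sum_range_sub]
        ring

theorem isCompactOperator_of_intervalIntegral_unitary_conj {a b : ℝ} (hab : a ≤ b)
    {A G : ℝ → E →L[ℂ] E} (hAu : ∀ t ∈ Icc a b, A t ∈ unitary (E →L[ℂ] E))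
    (hAc : ContinuousOn A (Icc a b)) (hGc : ∀ x, ContinuousOn (fun t => G t x) (Icc a b))
    (hG : ∀ s ∈ Icc a b, ∀ t ∈ Icc a b, ∀ X : E →L[ℂ] E,
      (∀ x, X x = ∫ τ in s..t, G τ x) → IsCompactOperator X)
    (Y : E →L[ℂ] E) (hY : ∀ x, Y x = ∫ τ in a..b, A τ (G τ (star (A τ) x))) :
    IsCompactOperator Y := by
  obtain ⟨M, hM⟩ := isCompact_Icc.exists_bound_of_continuousOn_clm_apply hGc
  refine IsCompactOperator.of_forall_exists_norm_sub_le (2 * M * (b - a)) fun ε hε => ?_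
  obtain ⟨δ, hδ, hAδ⟩ := Metric.uniformContinuousOn_iff_le.1
    (isCompact_Icc.uniformContinuousOn_of_continuous hAc) ε hε
  obtain ⟨m, p, hp0, hpm, hpmono, hpδ⟩ := exists_partition_sub_le hab hδ
  refine exists_isCompactOperator_norm_sub_le_of_partition hp0 hpm hpmono hε.le hAu hAc hGc hM
    (fun i hi τ hτ => ?_) hG Y hY
  subst hp0 hpm
  rw [← dist_eq_norm]
  refine hAδ τ (Icc_subset_Icc (hpmono i.zero_le) (hpmono hi) hτ) (p i)
    ⟨hpmono i.zero_le, hpmono hi.le⟩ ?_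
  rw [Real.dist_eq, abs_of_nonneg (sub_nonneg.2 hτ.1)]
  linarith [hτ.2, hpδ i]

end UnitaryConjugation

theorem stmt_19_general (T : ℝ) (hT : 0 < T) (U U₀ : ℝ → (H →L[ℂ] H))
    (hUu : ∀ t ∈ Icc (0:ℝ) T, U t ∈ unitary (H →L[ℂ] H))
    (hU₀u : ∀ t ∈ Icc (0:ℝ) T, U₀ t ∈ unitary (H →L[ℂ] H))
    (hU₀cont : ∀ x : H, ContinuousOn (fun t => U₀ t x) (Icc (0:ℝ) T))
    (hLip : ∃ c : ℝ, 0 < c ∧ ∀ s ∈ Icc (0:ℝ) T, ∀ t ∈ Icc (0:ℝ) T,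
      ‖star (U t) * U₀ t - star (U s) * U₀ s‖ ≤ c * |t - s|)
    (W : ℝ → (H →L[ℂ] H))
    (hWcont : ∀ x : H, ContinuousOn (fun t => W t x) (Icc (0:ℝ) T))
    (hcompact : ∀ s ∈ Icc (0:ℝ) T, ∀ t ∈ Icc (0:ℝ) T, ∀ X : H →L[ℂ] H,
      (∀ x : H, X x = ∫ τ in s..t, (star (U₀ τ)) ((W τ) ((U₀ τ) x))) →
        IsCompactOperator X) :
    ∀ Y : H →L[ℂ] H,
      (∀ x : H, Y x = ∫ τ in (0:ℝ)..T, (star (U τ)) ((W τ) ((U τ) x))) →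
        IsCompactOperator Y := by
  intro Y hY
  obtain ⟨c, hc, hlip⟩ := hLip
  have hAc : ContinuousOn (fun t => star (U t) * U₀ t) (Icc 0 T) :=
    (LipschitzOnWith.of_dist_le_mul (K := c.toNNReal) fun t ht s hs => by
      rw [dist_eq_norm, dist_eq_norm, Real.coe_toNNReal c hc.le, Real.norm_eq_abs]
      exact hlip s hs t ht).continuousOn
  have hU₀adj := continuousOn_star_apply_of_mem_unitary hU₀u hU₀cont
  have hGc : ∀ x, ContinuousOn (fun τ => (star (U₀ τ) * W τ * U₀ τ) x) (Icc 0 T) := fun x =>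
    isCompact_Icc.continuousOn_clm_apply hU₀adj
      (isCompact_Icc.continuousOn_clm_apply hWcont (hU₀cont x))
  refine isCompactOperator_of_intervalIntegral_unitary_conj hT.le
    (A := fun t => star (U t) * U₀ t) (G := fun τ => star (U₀ τ) * W τ * U₀ τ)
    (fun t ht => mul_mem (Unitary.star_mem (hUu t ht)) (hU₀u t ht)) hAc hGc hcompact Y
    fun x => (hY x).trans (intervalIntegral.integral_congr fun τ hτ => ?_)
  rw [uIcc_of_le hT.le] at hτ
  have hU₀ : ∀ V, U₀ τ * (star (U₀ τ) * V) = V := fun V => by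
    rw [← mul_assoc, Unitary.mul_star_self_of_mem (hU₀u τ hτ), one_mul]
  have hconj : star (U τ) * W τ * U τ
      = star (U τ) * U₀ τ * (star (U₀ τ) * W τ * U₀ τ) * star (star (U τ) * U₀ τ) := by
    simp only [star_mul, star_star, mul_assoc, hU₀]
  exact congrArg (· x) hconj

/-- Abstract compactness propagation: let `U, U₀ : [0,T] → B(H)` be strongly continuous
families of unitary operators with `‖U(t)*U₀(t) − U(s)*U₀(s)‖ ≤ C|t−s|`, and let
`t ↦ W_t` be a strongly continuous family of bounded operators such that every strong
integral `∫_s^t U₀(τ)* W_τ U₀(τ) dτ` is compact.  Then the strong integral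
`∫_0^T U(τ)* W_τ U(τ) dτ` is compact. -/
theorem stmt_19 (T : ℝ) (hT : 0 < T) (U U₀ : ℝ → (H →L[ℂ] H))
    (hUu : ∀ t ∈ Icc (0:ℝ) T, U t ∈ unitary (H →L[ℂ] H))
    (hU₀u : ∀ t ∈ Icc (0:ℝ) T, U₀ t ∈ unitary (H →L[ℂ] H))
    (hUcont : ∀ x : H, ContinuousOn (fun t => U t x) (Icc (0:ℝ) T))
    (hU₀cont : ∀ x : H, ContinuousOn (fun t => U₀ t x) (Icc (0:ℝ) T))
    (hLip : ∃ c : ℝ, 0 < c ∧ ∀ s ∈ Icc (0:ℝ) T, ∀ t ∈ Icc (0:ℝ) T,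
      ‖star (U t) * U₀ t - star (U s) * U₀ s‖ ≤ c * |t - s|)
    (W : ℝ → (H →L[ℂ] H))
    (hWcont : ∀ x : H, ContinuousOn (fun t => W t x) (Icc (0:ℝ) T))
    (hcompact : ∀ s ∈ Icc (0:ℝ) T, ∀ t ∈ Icc (0:ℝ) T, ∀ X : H →L[ℂ] H,
      (∀ x : H, X x = ∫ τ in s..t, (star (U₀ τ)) ((W τ) ((U₀ τ) x))) →
        IsCompactOperator X) :
    ∀ Y : H →L[ℂ] H,
      (∀ x : H, Y x = ∫ τ in (0:ℝ)..T, (star (U τ)) ((W τ) ((U τ) x))) →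
        IsCompactOperator Y :=
  stmt_19_general T hT U U₀ hUu hU₀u hU₀cont hLip W hWcont hcompact
end
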